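/- arXiv:2509.08767 — 8 statements merged into one kernel-verified Lean document; each statement's English description precedes it below -/
import Mathlib

section
/- In a budget-aggregation game with linear utilities, the set of Nash equilibrium strategy profiles is convex: any convex combination of two Nash equilibria is again a Nash equilibrium. -/
def IsStrategy (n m : ℕ) (d : Fin m → ℝ) : Prop :=
  (∀ x, 0 ≤ d x) ∧ ∑ x, d x = 1 / n

def IsNash (n m : ℕ) (u : Fin n → (Fin m → ℝ) → ℝ) (δ : Fin n → Fin m → ℝ) : Prop :=
  (∀ i, IsStrategy n m (δ i)) ∧
  ∀ i, ∀ d, IsStrategy n m d →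
    u i ((∑ j, δ j) - δ i + d) ≤ u i (∑ j, δ j)

/-- with linear utilities, the set of Nash equilibrium profiles is
convex: any convex combination (componentwise) of two Nash equilibria is again
a Nash equilibrium. -/
theorem linear_nash_set_convex
    (n m : ℕ) (hn : 0 < n)
    (v : Fin n → Fin m → ℝ) (hv : ∀ i x, 0 ≤ v i x)
    (δ δ' : Fin n → Fin m → ℝ)
    (hδ : IsNash n m (fun i d => ∑ x, v i x * d x) δ)
    (hδ' : IsNash n m (fun i d => ∑ x, v i x * d x) δ')
    (t : ℝ) (ht0 : 0 ≤ t) (ht1 : t ≤ 1) :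
    IsNash n m (fun i d => ∑ x, v i x * d x)
      (fun i x => t * δ i x + (1 - t) * δ' i x) := by
  have ht1' : 0 ≤ 1 - t := by linarith
  constructor
  · intro i
    obtain ⟨h1, h2⟩ := hδ.1 i
    obtain ⟨h1', h2'⟩ := hδ'.1 i
    constructor
    · intro x
      exact add_nonneg (mul_nonneg ht0 (h1 x)) (mul_nonneg ht1' (h1' x))
    · rw [Finset.sum_add_distrib, ← Finset.mul_sum, ← Finset.mul_sum, h2, h2']
      ring
  · intro i d hd
    have A := hδ.2 i d hd
    have B := hδ'.2 i d hd
    simp only [Pi.add_apply, Pi.sub_apply, Finset.sum_apply] at A B ⊢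
    have eL : (∑ x, v i x * ((∑ j, (t * δ j x + (1 - t) * δ' j x))
          - (t * δ i x + (1 - t) * δ' i x) + d x))
        = t * (∑ x, v i x * ((∑ j, δ j x) - δ i x + d x))
          + (1 - t) * (∑ x, v i x * ((∑ j, δ' j x) - δ' i x + d x)) := by
      rw [Finset.mul_sum, Finset.mul_sum, ← Finset.sum_add_distrib]
      refine Finset.sum_congr rfl fun x _ => ?_
      rw [Finset.sum_add_distrib, ← Finset.mul_sum, ← Finset.mul_sum]
      ring
    have eR : (∑ x, v i x * (∑ j, (t * δ j x + (1 - t) * δ' j x)))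
        = t * (∑ x, v i x * (∑ j, δ j x))
          + (1 - t) * (∑ x, v i x * (∑ j, δ' j x)) := by
      rw [Finset.mul_sum, Finset.mul_sum, ← Finset.sum_add_distrib]
      refine Finset.sum_congr rfl fun x _ => ?_
      rw [Finset.sum_add_distrib, ← Finset.mul_sum, ← Finset.mul_sum]
      ring
    rw [eL, eR]
    have := mul_le_mul_of_nonneg_left A ht0
    have := mul_le_mul_of_nonneg_left B ht1'
    linarith
end

section
/- If all agents' Leontief valuations v_{i,x} are natural numbers, then the unique equilibrium aggregate distribution delta* and the corresponding utility profile u* are rational-valued. -/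
noncomputable def Apos {n m : ℕ} (v : Fin n → Fin m → ℝ) (i : Fin n) : Finset (Fin m) :=
  Finset.univ.filter (fun x => 0 < v i x)

noncomputable def leontief {n m : ℕ} (v : Fin n → Fin m → ℝ)
    (h : ∀ i, (Apos v i).Nonempty) (i : Fin n) (d : Fin m → ℝ) : ℝ :=
  (Apos v i).inf' (h i) (fun x => d x / v i x)


/-!
At a Nash equilibrium every agent funds only issues on which its Leontief ratio is binding:
moving money from a non-binding issue to a uniform spread over all issues strictly raises that
agent's utility. Hence two issues `y`, `z` funded by a common agent `i` satisfy
`δ*_z = (v_{i,z} / v_{i,y}) δ*_y`, so along a connected component of the co-funding graph all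
aggregate amounts are rational multiples of one of them. The agents funding a component spend all
their budget inside it, so the component receives a rational total `k / n`, which pins down that
one amount as a rational number.
-/

open Finset

theorem sum_sum_eq_sum_filter_sum_of_closed {ι α M : Type*} [Fintype ι] [Fintype α]
    [AddCommMonoid M] [DecidableEq M] (δ : ι → α → M) (C : Finset α)
    (hC : ∀ i y z, y ∈ C → δ i y ≠ 0 → δ i z ≠ 0 → z ∈ C) :
    ∑ y ∈ C, ∑ i, δ i y = ∑ i with ∃ y ∈ C, δ i y ≠ 0, ∑ x, δ i x := by
  rw [sum_comm, sum_filter]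
  refine sum_congr rfl fun i _ => ?_
  split_ifs with h
  · obtain ⟨y, hyC, hy⟩ := h
    exact sum_subset (subset_univ C) fun z _ hz => by_contra fun hne => hz (hC i y z hyC hy hne)
  · push Not at h
    exact sum_eq_zero h

section Leontief

variable {n m : ℕ} {v : Fin n → Fin m → ℝ} (hpos : ∀ i, (Apos v i).Nonempty)
  {i : Fin n} {s : Fin m → ℝ}

theorem mem_Apos {x : Fin m} : x ∈ Apos v i ↔ 0 < v i x := by
  simp [Apos]

theorem lt_leontief_iff {c : ℝ} : c < leontief v hpos i s ↔ ∀ x ∈ Apos v i, c * v i x < s x := by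
  simp only [leontief, lt_inf'_iff]
  exact forall₂_congr fun x hx => lt_div_iff₀ (mem_Apos.1 hx)

theorem leontief_mul_le_of_mem {x : Fin m} (hx : x ∈ Apos v i) :
    leontief v hpos i s * v i x ≤ s x :=
  (le_div_iff₀ (mem_Apos.1 hx)).1 (inf'_le _ hx)

theorem leontief_nonneg (hs : ∀ x, 0 ≤ s x) : 0 ≤ leontief v hpos i s :=
  le_inf' _ _ fun x hx => div_nonneg (hs x) (mem_Apos.1 hx).le

theorem leontief_mul_le (hs : ∀ x, 0 ≤ s x) (x : Fin m) : leontief v hpos i s * v i x ≤ s x := by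
  by_cases hx : x ∈ Apos v i
  · exact leontief_mul_le_of_mem hpos hx
  · exact (mul_nonpos_of_nonneg_of_nonpos (leontief_nonneg hpos hs)
      (not_lt.1 (mt mem_Apos.2 hx))).trans (hs x)

end Leontief

noncomputable def spreadFrom {m : ℕ} (d : Fin m → ℝ) (x₀ : Fin m) (ε : ℝ) (x : Fin m) : ℝ :=
  d x + ε / m - if x = x₀ then ε else 0

theorem IsStrategy.spreadFrom {n m : ℕ} {d : Fin m → ℝ} (hd : IsStrategy n m d) {x₀ : Fin m}
    {ε : ℝ} (hε : 0 ≤ ε) (hεd : ε ≤ d x₀) : IsStrategy n m (spreadFrom d x₀ ε) := by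
  have hm : (m : ℝ) ≠ 0 := Nat.cast_ne_zero.2 (Fin.pos x₀).ne'
  refine ⟨fun x => ?_, ?_⟩
  · unfold _root_.spreadFrom
    split_ifs with h
    · subst h; linarith [div_nonneg hε (Nat.cast_nonneg m)]
    · linarith [hd.1 x, div_nonneg hε (Nat.cast_nonneg m)]
  · simp only [_root_.spreadFrom, sum_sub_distrib, sum_add_distrib, sum_ite_eq', mem_univ,
      if_true, sum_const, card_univ, Fintype.card_fin, nsmul_eq_mul, hd.2]
    field_simp
    ring

theorem IsStrategy.exists_pos {n m : ℕ} {d : Fin m → ℝ} (hd : IsStrategy n m d) (hn : n ≠ 0) :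
    ∃ x, 0 < d x := by
  by_contra! h
  have h0 : ∑ x, d x = 0 := sum_eq_zero fun x _ => le_antisymm (h x) (hd.1 x)
  rw [hd.2] at h0
  exact one_div_ne_zero (Nat.cast_ne_zero.2 hn) h0

theorem leontief_lt_leontief_spreadFrom {n m : ℕ} {v : Fin n → Fin m → ℝ}
    (hpos : ∀ i, (Apos v i).Nonempty) {i : Fin n} (s : Fin m → ℝ) {x₀ : Fin m} {ε : ℝ}
    (hε : 0 < ε) (hεs : ε ≤ s x₀ - leontief v hpos i s * v i x₀) :
    leontief v hpos i s < leontief v hpos i (spreadFrom s x₀ ε) := by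
  have hgain : 0 < ε / m := div_pos hε (Nat.cast_pos.2 (Fin.pos x₀))
  refine (lt_leontief_iff hpos).2 fun x hx => ?_
  unfold spreadFrom
  split_ifs with h
  · subst h; linarith
  · linarith [leontief_mul_le_of_mem hpos (s := s) hx]

section Nash

variable {n m : ℕ} {u : Fin n → (Fin m → ℝ) → ℝ} {δ : Fin n → Fin m → ℝ}

theorem IsNash.le_aggregate (hNE : IsNash n m u δ) (i : Fin n) (x : Fin m) :
    δ i x ≤ (∑ j, δ j) x := by
  rw [Finset.sum_apply]
  exact single_le_sum (fun j _ => (hNE.1 j).1 x) (mem_univ i)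

theorem IsNash.aggregate_nonneg (hNE : IsNash n m u δ) (x : Fin m) : 0 ≤ (∑ j, δ j) x := by
  rw [Finset.sum_apply]
  exact sum_nonneg fun j _ => (hNE.1 j).1 x

variable {v : Fin n → Fin m → ℝ} {hpos : ∀ i, (Apos v i).Nonempty}

theorem IsNash.aggregate_eq_leontief_mul (hNE : IsNash n m (leontief v hpos) δ) {i : Fin n}
    {x₀ : Fin m} (hx₀ : 0 < δ i x₀) :
    (∑ j, δ j) x₀ = leontief v hpos i (∑ j, δ j) * v i x₀ := by
  set s := ∑ j, δ j
  refine le_antisymm ?_ (leontief_mul_le hpos hNE.aggregate_nonneg x₀)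
  by_contra! hgap
  set ε := min (δ i x₀) (s x₀ - leontief v hpos i s * v i x₀)
  have hε : 0 < ε := lt_min hx₀ (sub_pos.2 hgap)
  have hdev := hNE.2 i _ ((hNE.1 i).spreadFrom hε.le (min_le_left _ _))
  have hspread : s - δ i + spreadFrom (δ i) x₀ ε = spreadFrom s x₀ ε := by
    funext x
    simp only [Pi.add_apply, Pi.sub_apply, spreadFrom]
    ring
  rw [hspread] at hdev
  exact hdev.not_gt (leontief_lt_leontief_spreadFrom hpos s hε (min_le_right _ _))

theorem IsNash.valuation_pos (hNE : IsNash n m (leontief v hpos) δ) {i : Fin n} {x : Fin m}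
    (hx : 0 < δ i x) : 0 < v i x := by
  have h := hx.trans_le (hNE.le_aggregate i x)
  rw [hNE.aggregate_eq_leontief_mul hx] at h
  exact pos_of_mul_pos_right h (leontief_nonneg hpos hNE.aggregate_nonneg)

theorem IsNash.aggregate_eq_div_mul (hNE : IsNash n m (leontief v hpos) δ) {i : Fin n}
    {y z : Fin m} (hy : 0 < δ i y) (hz : 0 < δ i z) :
    (∑ j, δ j) z = v i z / v i y * (∑ j, δ j) y := by
  rw [hNE.aggregate_eq_leontief_mul hz, hNE.aggregate_eq_leontief_mul hy]
  field_simp [(hNE.valuation_pos hy).ne']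

def SharesFunder (δ : Fin n → Fin m → ℝ) (y z : Fin m) : Prop :=
  ∃ i, δ i y ≠ 0 ∧ δ i z ≠ 0

theorem IsNash.div_aggregate_mem {F : Subfield ℝ} (hvF : ∀ i x, v i x ∈ F)
    (hNE : IsNash n m (leontief v hpos) δ) {x₀ y : Fin m} (hx₀ : (∑ j, δ j) x₀ ≠ 0)
    (hy : Relation.ReflTransGen (SharesFunder δ) x₀ y) : (∑ j, δ j) y / (∑ j, δ j) x₀ ∈ F := by
  induction hy with
  | refl => rw [div_self hx₀]; exact F.one_mem
  | tail _ hbc ih =>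
    obtain ⟨i, hb, hc⟩ := hbc
    rw [hNE.aggregate_eq_div_mul (((hNE.1 i).1 _).lt_of_ne' hb) (((hNE.1 i).1 _).lt_of_ne' hc),
      mul_div_assoc]
    exact F.mul_mem (F.div_mem (hvF _ _) (hvF _ _)) ih

theorem IsNash.aggregate_mem {F : Subfield ℝ} (hvF : ∀ i x, v i x ∈ F)
    (hNE : IsNash n m (leontief v hpos) δ) (x₀ : Fin m) : (∑ j, δ j) x₀ ∈ F := by
  classical
  rcases (hNE.aggregate_nonneg x₀).eq_or_lt with h0 | hx₀
  · rw [← h0]; exact F.zero_mem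
  set C := univ.filter (Relation.ReflTransGen (SharesFunder δ) x₀)
  have hclosed : ∀ i y z, y ∈ C → δ i y ≠ 0 → δ i z ≠ 0 → z ∈ C := fun i y z hy hiy hiz =>
    mem_filter.2 ⟨mem_univ z, (mem_filter.1 hy).2.tail ⟨i, hiy, hiz⟩⟩
  obtain ⟨k, hmoney⟩ : ∃ k : ℕ, ∑ y ∈ C, (∑ j, δ j) y = k * (1 / n) := by
    simp only [Finset.sum_apply]
    rw [sum_sum_eq_sum_filter_sum_of_closed δ C hclosed, sum_congr rfl fun i _ => (hNE.1 i).2,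
      sum_const, nsmul_eq_mul]
    exact ⟨_, rfl⟩
  have hCpos : 0 < ∑ y ∈ C, (∑ j, δ j) y :=
    hx₀.trans_le (single_le_sum (fun y _ => hNE.aggregate_nonneg y)
      (mem_filter.2 ⟨mem_univ x₀, Relation.ReflTransGen.refl⟩))
  have hx₀_eq : (∑ j, δ j) x₀ =
      (∑ y ∈ C, (∑ j, δ j) y) / ∑ y ∈ C, (∑ j, δ j) y / (∑ j, δ j) x₀ := by
    rw [← sum_div]
    field_simp
  rw [hx₀_eq, hmoney]
  exact F.div_mem (F.mul_mem (natCast_mem F _) (F.div_mem F.one_mem (natCast_mem F _)))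
    (F.sum_mem fun y hy => hNE.div_aggregate_mem hvF hx₀.ne' (mem_filter.1 hy).2)

theorem IsNash.leontief_mem {F : Subfield ℝ} (hvF : ∀ i x, v i x ∈ F)
    (hNE : IsNash n m (leontief v hpos) δ) (i : Fin n) : leontief v hpos i (∑ j, δ j) ∈ F := by
  obtain ⟨x, hx⟩ := (hNE.1 i).exists_pos (Fin.pos i).ne'
  rw [eq_div_of_mul_eq (hNE.valuation_pos hx).ne' (hNE.aggregate_eq_leontief_mul hx).symm]
  exact F.div_mem (hNE.aggregate_mem hvF x) (hvF i x)

end Nash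

theorem leontief_equilibrium_rational_general
    (n m : ℕ)
    (v : Fin n → Fin m → ℕ)
    (hpos : ∀ i, (Apos (fun i x => (v i x : ℝ)) i).Nonempty)
    (δ : Fin n → Fin m → ℝ)
    (hNE : IsNash n m (leontief (fun i x => (v i x : ℝ)) hpos) δ) :
    (∀ x, ∃ q : ℚ, (∑ i, δ i x) = (q : ℝ)) ∧
    (∀ i, ∃ q : ℚ,
      leontief (fun i x => (v i x : ℝ)) hpos i (∑ j, δ j) = (q : ℝ)) := by
  set F := (Rat.castHom ℝ).fieldRange
  have hvF : ∀ i x, ((v i x : ℕ) : ℝ) ∈ F := fun i x => natCast_mem F _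
  refine ⟨fun x => ?_, fun i => ?_⟩
  · obtain ⟨q, hq⟩ := RingHom.mem_fieldRange.1 (hNE.aggregate_mem hvF x)
    exact ⟨q, by simpa [Finset.sum_apply] using hq.symm⟩
  · obtain ⟨q, hq⟩ := RingHom.mem_fieldRange.1 (hNE.leontief_mem hvF i)
    exact ⟨q, hq.symm⟩

/-- with natural-number Leontief valuations, the (unique) equilibrium
aggregate distribution and the corresponding utility profile are rational-valued. -/
theorem leontief_equilibrium_rational
    (n m : ℕ) (hn : 0 < n)
    (v : Fin n → Fin m → ℕ)
    (hpos : ∀ i, (Apos (fun i x => (v i x : ℝ)) i).Nonempty)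
    (δ : Fin n → Fin m → ℝ)
    (hNE : IsNash n m (leontief (fun i x => (v i x : ℝ)) hpos) δ) :
    (∀ x, ∃ q : ℚ, (∑ i, δ i x) = (q : ℝ)) ∧
    (∀ i, ∃ q : ℚ,
      leontief (fun i x => (v i x : ℝ)) hpos i (∑ j, δ j) = (q : ℝ)) :=
  leontief_equilibrium_rational_general n m v hpos δ hNE
end

section
/- In a Nash equilibrium of a budget-aggregation game with Leontief utilities where agents' critical-alternative sets connect all alternatives in a component A' supported by agents N', the sum of the equilibrium aggregate shares over alternatives in A' equals |N'|/n. -/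
noncomputable def critical {n m : ℕ} (v : Fin n → Fin m → ℝ)
    (h : ∀ i, (Apos v i).Nonempty) (i : Fin n) (d : Fin m → ℝ) : Finset (Fin m) :=
  (Apos v i).filter (fun x => d x / v i x = leontief v h i d)

/-!
In equilibrium every agent contributes only to her critical alternatives: if she put
mass on a non-critical `x`, moving a small amount `ε` from `x` and spreading it evenly
over her critical set would raise every critical ratio while keeping all other ratios
above the old minimum, strictly increasing her Leontief utility. Since `A'` is closed
under the "both critical for one agent" relation, each agent's support then lies either
inside `A'` or outside it, so `A'` receives the whole budget `1 / n` of each agent of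
`N'` and nothing from the others.
-/

open Finset

section Transfer

variable {α : Type*} [DecidableEq α]

noncomputable def transfer (x : α) (ε : ℝ) (T : Finset α) (z : α) : ℝ :=
  (if z ∈ T then ε / T.card else 0) - (if z = x then ε else 0)

theorem sum_transfer [Fintype α] (x : α) (ε : ℝ) {T : Finset α} (hT : T.Nonempty) :
    ∑ z, transfer x ε T z = 0 := by
  have hcard : (T.card : ℝ) ≠ 0 := by exact_mod_cast hT.card_pos.ne'
  simp only [transfer, sum_sub_distrib, sum_ite_mem, univ_inter, sum_const, nsmul_eq_mul,
    sum_ite_eq', mem_univ, if_true]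
  field_simp
  ring

theorem transfer_self (ε : ℝ) {T : Finset α} {x : α} (hx : x ∉ T) :
    transfer x ε T x = -ε := by
  simp [transfer, hx]

theorem transfer_nonneg_of_ne {ε : ℝ} (hε : 0 ≤ ε) (T : Finset α) {x z : α} (hz : z ≠ x) :
    0 ≤ transfer x ε T z := by
  simp only [transfer, if_neg hz, sub_zero]
  split_ifs
  · positivity
  · exact le_rfl

end Transfer

theorem IsStrategy.add_transfer {n m : ℕ} {d : Fin m → ℝ} (hd : IsStrategy n m d)
    {x : Fin m} {ε : ℝ} {T : Finset (Fin m)} (hT : T.Nonempty) (hx : x ∉ T)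
    (hε : 0 ≤ ε) (hεx : ε ≤ d x) :
    IsStrategy n m (d + transfer x ε T) := by
  refine ⟨fun z => ?_, ?_⟩
  · by_cases hzx : z = x
    · subst hzx
      simp only [Pi.add_apply, transfer_self ε hx]
      linarith
    · exact add_nonneg (hd.1 z) (transfer_nonneg_of_ne hε T hzx)
  · simp only [Pi.add_apply, sum_add_distrib, sum_transfer x ε hT, add_zero, hd.2]

theorem IsStrategy.sum_eq_of_support_subset {n m : ℕ} {d : Fin m → ℝ}
    (hd : IsStrategy n m d) {A : Finset (Fin m)} (hA : ∀ x, 0 < d x → x ∈ A) :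
    ∑ x ∈ A, d x = 1 / n := by
  rw [← hd.2]
  refine sum_subset (subset_univ A) fun x _ hxA => ?_
  by_contra hne
  exact hxA (hA x ((hd.1 x).lt_of_ne' hne))

section Leontief

variable {n m : ℕ} {v : Fin n → Fin m → ℝ} {h : ∀ i, (Apos v i).Nonempty}

theorem critical_nonempty (i : Fin n) (D : Fin m → ℝ) : (critical v h i D).Nonempty := by
  obtain ⟨y, hy, hyval⟩ := exists_mem_eq_inf' (h i) fun z => D z / v i z
  exact ⟨y, mem_filter.mpr ⟨hy, hyval.symm⟩⟩

theorem leontief_lt_of_notMem_critical {i : Fin n} {D : Fin m → ℝ} {z : Fin m}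
    (hz : z ∈ Apos v i) (hzT : z ∉ critical v h i D) :
    leontief v h i D < D z / v i z :=
  (inf'_le _ hz).lt_of_ne fun heq => hzT (mem_filter.mpr ⟨hz, heq.symm⟩)

theorem leontief_lt_leontief_add_transfer {i : Fin n} {D : Fin m → ℝ} {x : Fin m}
    (hx : x ∉ critical v h i D) {ε : ℝ} (hε : 0 < ε)
    (hεx : x ∈ Apos v i → leontief v h i D < (D x - ε) / v i x) :
    leontief v h i D < leontief v h i (D + transfer x ε (critical v h i D)) := by
  set T := critical v h i D
  refine (lt_inf'_iff (h i)).mpr fun z hz => ?_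
  have hvz : 0 < v i z := (mem_filter.mp hz).2
  by_cases hzT : z ∈ T
  · have hzx : z ≠ x := fun hzx => hx (hzx ▸ hzT)
    have hLz : D z / v i z = leontief v h i D := (mem_filter.mp hzT).2
    have hshare : 0 < ε / T.card / v i z := by
      have : (0 : ℝ) < T.card := by exact_mod_cast card_pos.mpr ⟨z, hzT⟩
      positivity
    simp only [Pi.add_apply, transfer, if_pos hzT, if_neg hzx, sub_zero, add_div, hLz]
    linarith
  · by_cases hzx : z = x
    · subst hzx
      simpa [transfer, hzT, sub_eq_add_neg] using hεx hz
    · simpa [transfer, hzT, hzx] using leontief_lt_of_notMem_critical hz hzT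

theorem exists_transfer_amount {i : Fin n} {D : Fin m → ℝ} {x : Fin m} {a : ℝ} (ha : 0 < a)
    (hx : x ∉ critical v h i D) :
    ∃ ε, 0 < ε ∧ ε ≤ a ∧ (x ∈ Apos v i → leontief v h i D < (D x - ε) / v i x) := by
  by_cases hxA : x ∈ Apos v i
  · have hvx : 0 < v i x := (mem_filter.mp hxA).2
    have hgap : leontief v h i D * v i x < D x :=
      (lt_div_iff₀ hvx).mp (leontief_lt_of_notMem_critical hxA hx)
    refine ⟨min a ((D x - leontief v h i D * v i x) / 2), lt_min ha (by linarith),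
      min_le_left _ _, fun _ => (lt_div_iff₀ hvx).mpr ?_⟩
    linarith [min_le_right a ((D x - leontief v h i D * v i x) / 2)]
  · exact ⟨a, ha, le_rfl, fun hxA' => (hxA hxA').elim⟩

theorem IsNash.mem_critical_of_pos {δ : Fin n → Fin m → ℝ} (hNE : IsNash n m (leontief v h) δ)
    {i : Fin n} {x : Fin m} (hx : 0 < δ i x) : x ∈ critical v h i (∑ j, δ j) := by
  set D := ∑ j, δ j
  by_contra hxT
  obtain ⟨ε, hε, hεδ, hεx⟩ := exists_transfer_amount hx hxT
  have hdev := hNE.2 i _ ((hNE.1 i).add_transfer (critical_nonempty i D) hxT hε.le hεδ)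
  rw [show D - δ i + (δ i + transfer x ε (critical v h i D))
      = D + transfer x ε (critical v h i D) by abel] at hdev
  exact hdev.not_gt (leontief_lt_leontief_add_transfer hxT hε hεx)

theorem IsNash.eq_zero_of_mem_of_pos_notMem {δ : Fin n → Fin m → ℝ}
    (hNE : IsNash n m (leontief v h) δ) {A : Finset (Fin m)}
    (hclosed : ∀ x ∈ A, ∀ y : Fin m,
      (∃ i, x ∈ critical v h i (∑ j, δ j) ∧ y ∈ critical v h i (∑ j, δ j)) → y ∈ A)
    {i : Fin n} {y : Fin m} (hy : 0 < δ i y) (hyA : y ∉ A) {x : Fin m} (hxA : x ∈ A) :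
    δ i x = 0 := by
  by_contra hne
  have hx : 0 < δ i x := ((hNE.1 i).1 x).lt_of_ne' hne
  exact hyA (hclosed x hxA y ⟨i, hNE.mem_critical_of_pos hx, hNE.mem_critical_of_pos hy⟩)

end Leontief

theorem leontief_component_share_general
    (n m : ℕ)
    (v : Fin n → Fin m → ℝ)
    (hpos : ∀ i, (Apos v i).Nonempty)
    (δ : Fin n → Fin m → ℝ)
    (hNE : IsNash n m (leontief v hpos) δ)
    (A' : Finset (Fin m))
    -- `A'` is closed under the edge relation "both critical for some agent":
    (hclosed : ∀ x ∈ A', ∀ y : Fin m,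
      (∃ i, x ∈ critical v hpos i (∑ j, δ j) ∧ y ∈ critical v hpos i (∑ j, δ j)) →
      y ∈ A')
    (N' : Finset (Fin n))
    (hN' : N' = Finset.univ.filter (fun i => ∀ x, 0 < δ i x → x ∈ A')) :
    ∑ x ∈ A', (∑ i, δ i x) = (N'.card : ℝ) / n := by
  have houtside : ∀ i ∉ N', ∑ x ∈ A', δ i x = 0 := fun i hi => by
    obtain ⟨y, hy, hyA⟩ : ∃ y, 0 < δ i y ∧ y ∉ A' := by simpa [hN'] using hi
    exact sum_eq_zero fun x hx => hNE.eq_zero_of_mem_of_pos_notMem hclosed hy hyA hx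
  have hinside : ∀ i ∈ N', ∑ x ∈ A', δ i x = 1 / n := fun i hi =>
    (hNE.1 i).sum_eq_of_support_subset (by simpa [hN'] using hi)
  calc ∑ x ∈ A', ∑ i, δ i x
      = ∑ i ∈ N', ∑ x ∈ A', δ i x := by
        rw [sum_comm]
        exact (sum_subset (subset_univ N') fun i _ hi => houtside i hi).symm
    _ = (N'.card : ℝ) / n := by
        rw [sum_congr rfl hinside, sum_const, nsmul_eq_mul, mul_one_div]

/-- in a Leontief Nash equilibrium, if `A'` is a connected component
of the graph on alternatives linking `x` and `y` whenever both are critical for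
some agent, and `N'` is the set of agents whose contributions are supported in
`A'`, then the total equilibrium share of `A'` equals `|N'| / n`. -/
theorem leontief_component_share
    (n m : ℕ) (hn : 0 < n)
    (v : Fin n → Fin m → ℝ) (hv : ∀ i x, 0 ≤ v i x)
    (hpos : ∀ i, (Apos v i).Nonempty)
    (δ : Fin n → Fin m → ℝ)
    (hNE : IsNash n m (leontief v hpos) δ)
    (A' : Finset (Fin m))
    -- `A'` is closed under the edge relation "both critical for some agent":
    (hclosed : ∀ x ∈ A', ∀ y : Fin m,
      (∃ i, x ∈ critical v hpos i (∑ j, δ j) ∧ y ∈ critical v hpos i (∑ j, δ j)) →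
      y ∈ A')
    (N' : Finset (Fin n))
    (hN' : N' = Finset.univ.filter (fun i => ∀ x, 0 < δ i x → x ∈ A')) :
    ∑ x ∈ A', (∑ i, δ i x) = (N'.card : ℝ) / n :=
  leontief_component_share_general n m v hpos δ hNE A' hclosed N' hN'
end

section
/- In a budget-aggregation game where each agent i has utility u_i(delta) = sum over x in A_i of g_i(delta_x) for a continuous strictly convex strictly increasing g_i : [0,1] -> R, a strategy profile (delta_i*) is a Nash equilibrium if and only if every agent's support is a singleton equal to M_{delta*,i} and |M_{delta*,i}| = 1, where M_{delta,i} = argmax_{x in A_i} delta_x. -/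
/-- Support of an individual distribution. -/
noncomputable def suppF {m : ℕ} (d : Fin m → ℝ) : Finset (Fin m) :=
  Finset.univ.filter (fun x => 0 < d x)

/-- `M δ i`: approved alternatives of `i` receiving maximal aggregate share. -/
noncomputable def Mset {m : ℕ} (A : Finset (Fin m)) (d : Fin m → ℝ) : Finset (Fin m) :=
  A.filter (fun x => ∀ y ∈ A, d y ≤ d x)

open Finset

section Convexity

variable {𝕜 : Type*} [Field 𝕜] [LinearOrder 𝕜] [IsStrictOrderedRing 𝕜] {s : Set 𝕜} {f : 𝕜 → 𝕜}
  {x y z w : 𝕜}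

theorem ConvexOn.slope_le_slope_of_le (hf : ConvexOn 𝕜 s f) (hx : x ∈ s) (hw : w ∈ s)
    (hxy : x < y) (hzw : z < w) (hxz : x ≤ z) (hyw : y ≤ w) :
    (f y - f x) / (y - x) ≤ (f w - f z) / (w - z) := by
  have hy : y ∈ s := hf.1.ordConnected.out hx hw ⟨hxy.le, hyw⟩
  have hz : z ∈ s := hf.1.ordConnected.out hx hw ⟨hxz, hzw.le⟩
  calc (f y - f x) / (y - x) ≤ (f w - f x) / (w - x) :=
        hf.secant_mono hx hy hw hxy.ne' (hxy.trans_le hyw).ne' hyw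
    _ = (f x - f w) / (x - w) := by rw [← neg_div_neg_eq, neg_sub, neg_sub]
    _ ≤ (f z - f w) / (z - w) := hf.secant_mono hw hx hz (hxz.trans_lt hzw).ne hzw.ne hxz
    _ = (f w - f z) / (w - z) := by rw [← neg_div_neg_eq, neg_sub, neg_sub]

theorem StrictConvexOn.slope_lt_slope_of_lt (hf : StrictConvexOn 𝕜 s f) (hx : x ∈ s) (hw : w ∈ s)
    (hxy : x < y) (hzw : z < w) (hxz : x < z) (hyw : y ≤ w) :
    (f y - f x) / (y - x) < (f w - f z) / (w - z) := by
  have hy : y ∈ s := hf.1.ordConnected.out hx hw ⟨hxy.le, hyw⟩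
  have hz : z ∈ s := hf.1.ordConnected.out hx hw ⟨hxz.le, hzw.le⟩
  calc (f y - f x) / (y - x) ≤ (f w - f x) / (w - x) :=
        hf.convexOn.secant_mono hx hy hw hxy.ne' (hxy.trans_le hyw).ne' hyw
    _ = (f x - f w) / (x - w) := by rw [← neg_div_neg_eq, neg_sub, neg_sub]
    _ < (f z - f w) / (z - w) := hf.secant_strict_mono hw hx hz (hxz.trans hzw).ne hzw.ne hxz
    _ = (f w - f z) / (w - z) := by rw [← neg_div_neg_eq, neg_sub, neg_sub]

theorem ConvexOn.sub_le_mul_slope_of_le (hf : ConvexOn 𝕜 s f) {a c t h : 𝕜} (ha : a ∈ s)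
    (hch : c + h ∈ s) (hac : a ≤ c) (ht : 0 ≤ t) (hth : t ≤ h) :
    f (a + t) - f a ≤ t * ((f (c + h) - f c) / h) := by
  rcases ht.eq_or_lt with rfl | ht
  · simp
  have hslope := hf.slope_le_slope_of_le ha hch (lt_add_of_pos_right a ht)
    (lt_add_of_pos_right c (ht.trans_le hth)) hac (add_le_add hac hth)
  rwa [add_sub_cancel_left, add_sub_cancel_left, div_le_iff₀' ht] at hslope

theorem StrictConvexOn.sub_lt_sub_of_lt (hf : StrictConvexOn 𝕜 s f) {a c h : 𝕜} (ha : a ∈ s)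
    (hch : c + h ∈ s) (hac : a < c) (hh : 0 < h) :
    f (a + h) - f a < f (c + h) - f c := by
  have hslope := hf.slope_lt_slope_of_lt ha hch (lt_add_of_pos_right a hh)
    (lt_add_of_pos_right c hh) hac (add_le_add_left hac.le h)
  rwa [add_sub_cancel_left, add_sub_cancel_left, div_lt_div_iff_of_pos_right hh] at hslope

theorem StrictConvexOn.split_lt_concentrate (hf : StrictConvexOn 𝕜 s f) {p q u v : 𝕜}
    (hp : p ∈ s) (hq : q ∈ s) (hpuv : p + u + v ∈ s) (hquv : q + v + u ∈ s)
    (hu : 0 < u) (hv : 0 < v) :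
    f (p + u) + f (q + v) < f p + f (q + v + u) ∨
      f (p + u) + f (q + v) < f (p + u + v) + f q := by
  rcases lt_or_ge p (q + v) with hlt | hle
  · have := hf.sub_lt_sub_of_lt hp hquv hlt hu
    left; linarith
  · have := hf.sub_lt_sub_of_lt hq hpuv (by linarith) hv
    right; linarith

end Convexity

section SumUpdate

variable {ι M N : Type*} [DecidableEq ι] [AddCommGroup N] {s : Finset ι} {x y : ι}

theorem Finset.sum_comp_add_single_of_mem [AddCommMonoid M] (hx : x ∈ s) (G : M → N)
    (f : ι → M) (t : M) :
    ∑ z ∈ s, G ((f + Pi.single x t : ι → M) z) = ∑ z ∈ s, G (f z) + (G (f x + t) - G (f x)) := by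
  have hrest : ∑ z ∈ s.erase x, G ((f + Pi.single x t : ι → M) z) = ∑ z ∈ s.erase x, G (f z) :=
    sum_congr rfl fun z hz => by
      rw [Pi.add_apply, Pi.single_eq_of_ne (ne_of_mem_erase hz), add_zero]
  rw [← add_sum_erase s _ hx, ← add_sum_erase s _ hx, hrest, Pi.add_apply, Pi.single_eq_same]
  abel

theorem Finset.sum_comp_add_single_of_notMem [AddCommMonoid M] (hx : x ∉ s) (G : M → N)
    (f : ι → M) (t : M) :
    ∑ z ∈ s, G ((f + Pi.single x t : ι → M) z) = ∑ z ∈ s, G (f z) :=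
  sum_congr rfl fun z hz => by
    rw [Pi.add_apply, Pi.single_eq_of_ne (ne_of_mem_of_not_mem hz hx), add_zero]

theorem Finset.sum_comp_transfer_of_mem [AddCommGroup M] (hx : x ∈ s) (hy : y ∈ s) (hxy : x ≠ y)
    (G : M → N) (f : ι → M) (t : M) :
    ∑ z ∈ s, G ((f + Pi.single x (-t) + Pi.single y t : ι → M) z) =
      ∑ z ∈ s, G (f z) + (G (f x - t) - G (f x)) + (G (f y + t) - G (f y)) := by
  rw [sum_comp_add_single_of_mem hy, sum_comp_add_single_of_mem hx, Pi.add_apply,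
    Pi.single_eq_of_ne hxy.symm, add_zero, ← sub_eq_add_neg]

theorem Finset.sum_comp_transfer_of_notMem [AddCommGroup M] (hx : x ∉ s) (hy : y ∈ s)
    (G : M → N) (f : ι → M) (t : M) :
    ∑ z ∈ s, G ((f + Pi.single x (-t) + Pi.single y t : ι → M) z) =
      ∑ z ∈ s, G (f z) + (G (f y + t) - G (f y)) := by
  rw [sum_comp_add_single_of_mem hy, sum_comp_add_single_of_notMem hx, Pi.add_apply,
    Pi.single_eq_of_ne (ne_of_mem_of_not_mem hy hx), add_zero]

end SumUpdate

section Strategy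

variable {n m : ℕ} {e : Fin m → ℝ}

theorem isStrategy_single (x : Fin m) : IsStrategy n m (Pi.single x (1 / n : ℝ)) :=
  ⟨fun z => by rw [Pi.single_apply]; split_ifs <;> positivity, by simp⟩

namespace IsStrategy

theorem sum_le (he : IsStrategy n m e) (s : Finset (Fin m)) : ∑ x ∈ s, e x ≤ 1 / n :=
  he.2 ▸ sum_le_sum_of_subset_of_nonneg (subset_univ s) fun x _ _ => he.1 x

theorem apply_le (he : IsStrategy n m e) (x : Fin m) : e x ≤ 1 / n := by
  simpa using he.sum_le {x}

theorem add_apply_le (he : IsStrategy n m e) {x y : Fin m} (hxy : x ≠ y) : e x + e y ≤ 1 / n := by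
  simpa [sum_pair hxy] using he.sum_le {x, y}

theorem exists_pos_s9 (he : IsStrategy n m e) (hn : 0 < n) : ∃ x, 0 < e x := by
  have : ∑ _x : Fin m, (0 : ℝ) < ∑ x, e x := by rw [he.2]; simpa using hn
  simpa using exists_lt_of_sum_lt this

theorem eq_single (he : IsStrategy n m e) {x : Fin m} (hx : ∀ z, 0 < e z → z = x) :
    e = Pi.single x (1 / n : ℝ) := by
  have hzero : ∀ z, z ≠ x → e z = 0 := fun z hz =>
    ((he.1 z).eq_or_lt.resolve_right fun hpos => hz (hx z hpos)).symm
  have hex : e x = 1 / n := by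
    rw [← he.2, sum_eq_single x (fun z _ hz => hzero z hz) (by simp)]
  ext z
  rcases eq_or_ne z x with rfl | hz
  · simpa using hex
  · simp [hzero z hz, hz]

theorem add_single_neg_add_single (he : IsStrategy n m e) {x : Fin m} {t : ℝ} (ht : 0 ≤ t)
    (hte : t ≤ e x) (y : Fin m) : IsStrategy n m (e + Pi.single x (-t) + Pi.single y t) := by
  refine ⟨fun z => ?_, by simp [sum_add_distrib, he.2]⟩
  have hy : 0 ≤ (Pi.single y t : Fin m → ℝ) z := by rw [Pi.single_apply]; split_ifs <;> simp [ht]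
  rcases eq_or_ne z x with rfl | hz
  · simp only [Pi.add_apply, Pi.single_eq_same]; linarith
  · simp only [Pi.add_apply, Pi.single_eq_of_ne hz, add_zero]; linarith [he.1 z]

end IsStrategy

end Strategy

def IsBestResponse (n m : ℕ) (u : (Fin m → ℝ) → ℝ) (b e : Fin m → ℝ) : Prop :=
  IsStrategy n m e ∧ ∀ d, IsStrategy n m d → u (b + d) ≤ u (b + e)

theorem isNash_iff_forall_isBestResponse {n m : ℕ} {u : Fin n → (Fin m → ℝ) → ℝ}
    {δ : Fin n → Fin m → ℝ} :
    IsNash n m u δ ↔ ∀ i, IsBestResponse n m (u i) (∑ j, δ j - δ i) (δ i) := by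
  simp only [IsNash, IsBestResponse, sub_add_cancel, forall_and]

section BestResponse

variable {n m : ℕ} {A : Finset (Fin m)} {g : ℝ → ℝ} {b e : Fin m → ℝ} {x y : Fin m}

theorem IsBestResponse.transfer_le {u : (Fin m → ℝ) → ℝ} (hbr : IsBestResponse n m u b e)
    {t : ℝ} (ht : 0 ≤ t) (hte : t ≤ e x) (y : Fin m) :
    u (b + e + Pi.single x (-t) + Pi.single y t) ≤ u (b + e) := by
  simpa only [add_assoc] using hbr.2 _ (hbr.1.add_single_neg_add_single ht hte y)

theorem IsBestResponse.mem_of_pos (hbr : IsBestResponse n m (fun f => ∑ z ∈ A, g (f z)) b e)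
    (hA : A.Nonempty) (hg : StrictMonoOn g (Set.Icc 0 1)) (hb0 : ∀ z, 0 ≤ b z)
    (hb1 : ∀ z, b z + 1 / n ≤ 1) (hx : 0 < e x) : x ∈ A := by
  by_contra hxA
  obtain ⟨y, hy⟩ := hA
  have hxy : x ≠ y := fun h => hxA (h ▸ hy)
  have hdev := hbr.transfer_le hx.le le_rfl y
  rw [sum_comp_transfer_of_notMem hxA hy] at hdev
  have hgain : g (b y + e y) < g (b y + e y + e x) := by
    have := hbr.1.add_apply_le hxy
    refine hg ⟨?_, ?_⟩ ⟨?_, ?_⟩ ?_ <;> linarith [hb0 y, hb1 y, hbr.1.1 y]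
  simp only [Pi.add_apply] at hdev
  linarith

theorem IsBestResponse.eq_of_pos (hbr : IsBestResponse n m (fun f => ∑ z ∈ A, g (f z)) b e)
    (hg : StrictConvexOn ℝ (Set.Icc 0 1) g) (hb0 : ∀ z, 0 ≤ b z) (hb1 : ∀ z, b z + 1 / n ≤ 1)
    (hsupp : ∀ z, 0 < e z → z ∈ A) (hx : 0 < e x) (hy : 0 < e y) : x = y := by
  by_contra hxy
  have hbudget := hbr.1.add_apply_le hxy
  have hmove_to_y := hbr.transfer_le hx.le le_rfl y
  have hmove_to_x := hbr.transfer_le hy.le le_rfl x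
  rw [sum_comp_transfer_of_mem (hsupp x hx) (hsupp y hy) hxy] at hmove_to_y
  rw [sum_comp_transfer_of_mem (hsupp y hy) (hsupp x hx) (Ne.symm hxy)] at hmove_to_x
  simp only [Pi.add_apply, add_sub_cancel_right] at hmove_to_y hmove_to_x
  have hex := hbr.1.1 x
  have hey := hbr.1.1 y
  rcases hg.split_lt_concentrate (p := b x) (q := b y)
    ⟨hb0 x, by linarith [hb1 x]⟩ ⟨hb0 y, by linarith [hb1 y]⟩
    ⟨by linarith [hb0 x], by linarith [hb1 x]⟩ ⟨by linarith [hb0 y], by linarith [hb1 y]⟩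
    hx hy with h | h <;> linarith

theorem IsBestResponse.le_of_eq_single
    (hbr : IsBestResponse n m (fun f => ∑ z ∈ A, g (f z)) b (Pi.single x (1 / n : ℝ)))
    (hn : 0 < n) (hg : StrictConvexOn ℝ (Set.Icc 0 1) g) (hb0 : ∀ z, 0 ≤ b z)
    (hb1 : ∀ z, b z + 1 / n ≤ 1) (hx : x ∈ A) (hy : y ∈ A) : b y ≤ b x := by
  rcases eq_or_ne y x with rfl | hyx
  · rfl
  by_contra! hlt
  have hw : (0 : ℝ) < 1 / n := by positivity
  have hdev := hbr.transfer_le (x := x) hw.le (by simp) y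
  rw [sum_comp_transfer_of_mem hx hy hyx.symm] at hdev
  simp only [Pi.add_apply, Pi.single_eq_same, Pi.single_eq_of_ne hyx, add_zero,
    add_sub_cancel_right] at hdev
  have := hg.sub_lt_sub_of_lt ⟨hb0 x, by linarith [hb1 x]⟩ ⟨by linarith [hb0 y], hb1 y⟩ hlt hw
  linarith

theorem isBestResponse_single (hgc : ConvexOn ℝ (Set.Icc 0 1) g) (hgm : MonotoneOn g (Set.Icc 0 1))
    (hb0 : ∀ z, 0 ≤ b z) (hb1 : ∀ z, b z + 1 / n ≤ 1) (hx : x ∈ A) (hmax : ∀ y ∈ A, b y ≤ b x) :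
    IsBestResponse n m (fun f => ∑ z ∈ A, g (f z)) b (Pi.single x (1 / n : ℝ)) := by
  refine ⟨isStrategy_single x, fun d hd => ?_⟩
  have hw : (0 : ℝ) ≤ 1 / n := by positivity
  set S := (g (b x + 1 / n) - g (b x)) / (1 / n)
  have hterm : ∀ z ∈ A, g (b z + d z) ≤ g (b z) + d z * S := fun z hz => by
    have := hgc.sub_le_mul_slope_of_le ⟨hb0 z, by linarith [hb1 z]⟩
      ⟨by linarith [hb0 x], hb1 x⟩ (hmax z hz) (hd.1 z) (hd.apply_le z)
    exact sub_le_iff_le_add'.1 this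
  have hS : 0 ≤ S := div_nonneg (sub_nonneg.2 (hgm ⟨hb0 x, by linarith [hb1 x]⟩
    ⟨by linarith [hb0 x], hb1 x⟩ (by linarith))) hw
  calc ∑ z ∈ A, g ((b + d) z) ≤ ∑ z ∈ A, (g (b z) + d z * S) := sum_le_sum hterm
    _ = ∑ z ∈ A, g (b z) + (∑ z ∈ A, d z) * S := by rw [sum_add_distrib, sum_mul]
    _ ≤ ∑ z ∈ A, g (b z) + 1 / n * S := by gcongr; exact hd.sum_le A
    _ = ∑ z ∈ A, g ((b + Pi.single x (1 / n : ℝ) : Fin m → ℝ) z) := by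
      rw [sum_comp_add_single_of_mem hx]
      rcases eq_or_ne (1 / n : ℝ) 0 with hw0 | hw0
      · simp [S, hw0]
      · rw [mul_div_cancel₀ _ hw0]

theorem isBestResponse_iff (hn : 0 < n) (hA : A.Nonempty) (hgc : StrictConvexOn ℝ (Set.Icc 0 1) g)
    (hgm : StrictMonoOn g (Set.Icc 0 1)) (hb0 : ∀ z, 0 ≤ b z) (hb1 : ∀ z, b z + 1 / n ≤ 1) :
    IsBestResponse n m (fun f => ∑ z ∈ A, g (f z)) b e ↔
      ∃ x ∈ A, (∀ y ∈ A, b y ≤ b x) ∧ e = Pi.single x (1 / n : ℝ) := by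
  constructor
  · intro hbr
    have hsupp : ∀ z, 0 < e z → z ∈ A := fun z => hbr.mem_of_pos hA hgm hb0 hb1
    obtain ⟨x, hx⟩ := hbr.1.exists_pos_s9 hn
    have he : e = Pi.single x (1 / n : ℝ) :=
      hbr.1.eq_single fun z hz => hbr.eq_of_pos hgc hb0 hb1 hsupp hz hx
    subst he
    exact ⟨x, hsupp x hx, fun y hy => hbr.le_of_eq_single hn hgc hb0 hb1 (hsupp x hx) hy, rfl⟩
  · rintro ⟨x, hx, hmax, rfl⟩
    exact isBestResponse_single hgc.convexOn hgm.monotoneOn hb0 hb1 hx hmax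

end BestResponse

section Aggregate

variable {ι α : Type*} [Fintype ι] [DecidableEq α] {c : ι → α} {w : ℝ}

theorem sum_single_apply (c : ι → α) (w : ℝ) (z : α) :
    (∑ j, Pi.single (c j) w : α → ℝ) z = #{j | c j = z} * w := by
  simp only [Finset.sum_apply, Pi.single_apply, @eq_comm _ z]
  rw [← sum_filter, sum_const, nsmul_eq_mul]

theorem sum_single_apply_add_le (hw : 0 < w) {y z : α}
    (hlt : (∑ j, Pi.single (c j) w : α → ℝ) y < (∑ j, Pi.single (c j) w : α → ℝ) z) :
    (∑ j, Pi.single (c j) w : α → ℝ) y + w ≤ (∑ j, Pi.single (c j) w : α → ℝ) z := by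
  rw [sum_single_apply, sum_single_apply] at hlt ⊢
  have hcard : #{j | c j = y} < #{j | c j = z} := by
    exact_mod_cast lt_of_mul_lt_mul_right hlt hw.le
  have hcard' : (#{j | c j = y} : ℝ) + 1 ≤ #{j | c j = z} := by exact_mod_cast hcard
  nlinarith

end Aggregate

section Profile

variable {n m : ℕ} {δ : Fin n → Fin m → ℝ}

theorem sum_sub_apply_nonneg (hδ : ∀ j, IsStrategy n m (δ j)) (i : Fin n) (x : Fin m) :
    0 ≤ (∑ j, δ j - δ i) x := by
  rw [Pi.sub_apply, Finset.sum_apply, sub_nonneg]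
  exact single_le_sum (fun j _ => (hδ j).1 x) (mem_univ i)

theorem sum_sub_apply_add_le_one (hδ : ∀ j, IsStrategy n m (δ j)) (i : Fin n) (x : Fin m) :
    (∑ j, δ j - δ i) x + 1 / n ≤ 1 := by
  have hn : (n : ℝ) ≠ 0 := by exact_mod_cast i.pos.ne'
  have htotal : ∑ z, (∑ j, δ j) z = 1 := by
    simp only [Finset.sum_apply]
    rw [sum_comm]
    simp [(hδ _).2, hn]
  calc (∑ j, δ j - δ i) x + 1 / n ≤ ∑ z, (∑ j, δ j - δ i) z + 1 / n := by
        gcongr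
        exact single_le_sum (fun z _ => sum_sub_apply_nonneg hδ i z) (mem_univ x)
    _ = 1 := by simp only [Pi.sub_apply, sum_sub_distrib, htotal, (hδ i).2]; ring

end Profile

section Maximisers

variable {m : ℕ} {A : Finset (Fin m)} {f b : Fin m → ℝ} {x : Fin m} {w : ℝ}

theorem suppF_single (hw : 0 < w) : suppF (Pi.single x w) = {x} := by
  ext z
  rcases eq_or_ne z x with rfl | hz
  · simp [suppF, hw]
  · simp [suppF, hz]

theorem Mset_eq_singleton_iff : Mset A f = {x} ↔ x ∈ A ∧ ∀ y ∈ A, y ≠ x → f y < f x := by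
  constructor
  · intro hM
    have hx : x ∈ Mset A f := hM ▸ mem_singleton_self x
    obtain ⟨hxA, hxmax⟩ := mem_filter.1 hx
    refine ⟨hxA, fun y hy hyx => ?_⟩
    have hyM : y ∉ Mset A f := by simpa [hM] using hyx
    simp only [Mset, mem_filter, hy, true_and, not_forall, not_le] at hyM
    obtain ⟨z, hz, hlt⟩ := hyM
    exact hlt.trans_le (hxmax z hz)
  · rintro ⟨hxA, hxmax⟩
    ext z
    simp only [Mset, mem_filter, mem_singleton]
    constructor
    · rintro ⟨hz, hzmax⟩
      by_contra hzx
      exact (hxmax z hz hzx).not_ge (hzmax x hxA)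
    · rintro rfl
      exact ⟨hxA, fun y hy => (eq_or_ne y z).elim (fun h => h ▸ le_rfl) fun h => (hxmax y hy h).le⟩

theorem Mset_add_single_eq_singleton (hw : 0 < w) (hx : x ∈ A) (hmax : ∀ y ∈ A, b y ≤ b x) :
    Mset A (b + Pi.single x w) = {x} :=
  Mset_eq_singleton_iff.2 ⟨hx, fun y hy hyx => by
    simp only [Pi.add_apply, Pi.single_eq_same, Pi.single_eq_of_ne hyx, add_zero]
    linarith [hmax y hy]⟩

theorem sum_sub_apply_le_of_Mset_eq_singleton {n : ℕ} {δ : Fin n → Fin m → ℝ} {c : Fin n → Fin m}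
    (hw : 0 < w) (hδ : ∀ j, δ j = Pi.single (c j) w) {i : Fin n}
    (hM : Mset A (∑ j, δ j) = {c i}) {y : Fin m} (hy : y ∈ A) :
    (∑ j, δ j - δ i) y ≤ (∑ j, δ j - δ i) (c i) := by
  rcases eq_or_ne y (c i) with rfl | hyc
  · rfl
  have hlt := (Mset_eq_singleton_iff.1 hM).2 y hy hyc
  simp only [hδ] at hlt ⊢
  have := sum_single_apply_add_le hw hlt
  simp only [Pi.sub_apply, Pi.single_eq_same, Pi.single_eq_of_ne hyc, sub_zero]
  linarith

end Maximisers

theorem convex_case_nash_characterization_general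
    (n m : ℕ)
    (A : Fin n → Finset (Fin m)) (hA : ∀ i, (A i).Nonempty)
    (g : Fin n → ℝ → ℝ)
    (hconv : ∀ i, StrictConvexOn ℝ (Set.Icc (0 : ℝ) 1) (g i))
    (hmono : ∀ i, StrictMonoOn (g i) (Set.Icc (0 : ℝ) 1))
    (δ : Fin n → Fin m → ℝ) :
    IsNash n m (fun i d => ∑ x ∈ A i, g i (d x)) δ ↔
      (∀ i, IsStrategy n m (δ i)) ∧
      (∀ i, suppF (δ i) = Mset (A i) (∑ j, δ j) ∧
            (Mset (A i) (∑ j, δ j)).card = 1) := by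
  have hw (i : Fin n) : (0 : ℝ) < 1 / n := by have := i.pos; positivity
  have hBR (hδ : ∀ j, IsStrategy n m (δ j)) (i : Fin n) :=
    isBestResponse_iff (e := δ i) i.pos (hA i) (hconv i) (hmono i) (sum_sub_apply_nonneg hδ i)
      (sum_sub_apply_add_le_one hδ i)
  rw [isNash_iff_forall_isBestResponse]
  constructor
  · intro h
    have hδ (i : Fin n) : IsStrategy n m (δ i) := (h i).1
    refine ⟨hδ, fun i => ?_⟩
    obtain ⟨x, hxA, hmax, hx⟩ := (hBR hδ i).1 (h i)
    have hM : Mset (A i) (∑ j, δ j) = {x} := by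
      simpa only [← hx, sub_add_cancel] using Mset_add_single_eq_singleton (hw i) hxA hmax
    rw [hM, hx, suppF_single (hw i), card_singleton]
    exact ⟨rfl, rfl⟩
  · rintro ⟨hδ, hM⟩
    have hpoint (k : Fin n) :
        ∃ c, δ k = Pi.single c (1 / n : ℝ) ∧ Mset (A k) (∑ j, δ j) = {c} := by
      obtain ⟨c, hc⟩ := card_eq_one.1 (hM k).2
      refine ⟨c, (hδ k).eq_single fun z hz => ?_, hc⟩
      have hz' : z ∈ suppF (δ k) := by simp [suppF, hz]
      rwa [(hM k).1, hc, mem_singleton] at hz'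
    choose c hc hMc using hpoint
    exact fun i => (hBR hδ i).2 ⟨c i, (Mset_eq_singleton_iff.1 (hMc i)).1,
      fun y hy => sum_sub_apply_le_of_Mset_eq_singleton (hw i) hc (hMc i) hy, hc i⟩

/-- with binary symmetric separable strictly convex utilities
`u i δ = ∑_{x ∈ A i} g i (δ x)`, a profile is a Nash equilibrium iff each
agent's support equals `M_{δ*,i}` and this set is a singleton. -/
theorem convex_case_nash_characterization
    (n m : ℕ) (hn : 0 < n)
    (A : Fin n → Finset (Fin m)) (hA : ∀ i, (A i).Nonempty)
    (g : Fin n → ℝ → ℝ)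
    (hcont : ∀ i, Continuous (g i))
    (hconv : ∀ i, StrictConvexOn ℝ (Set.Icc (0 : ℝ) 1) (g i))
    (hmono : ∀ i, StrictMonoOn (g i) (Set.Icc (0 : ℝ) 1))
    (δ : Fin n → Fin m → ℝ) :
    IsNash n m (fun i d => ∑ x ∈ A i, g i (d x)) δ ↔
      (∀ i, IsStrategy n m (δ i)) ∧
      (∀ i, suppF (δ i) = Mset (A i) (∑ j, δ j) ∧
            (Mset (A i) (∑ j, δ j)).card = 1) :=
  convex_case_nash_characterization_general n m A hA g hconv hmono δ
end

section
/- In a budget-aggregation game with binary symmetric separable strictly convex utilities, a Nash equilibrium always exists; moreover, the greedy procedure that repeatedly selects an alternative approved by the maximum number of remaining agents and lets all those agents place their whole 1/n share on it produces a Nash equilibrium. -/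
/-- The pure strategy profile where each agent `i` puts her whole `1/n` share
on the single alternative `a i`. -/
noncomputable def pureProfile (n m : ℕ) (a : Fin n → Fin m) : Fin n → Fin m → ℝ :=
  fun i x => if x = a i then 1 / n else 0

/-- `GreedyOn A N' a`: the assignment `a` of the agents in `N'` can be produced
by the greedy procedure: repeatedly pick an alternative `x*` approved by a
maximum number of remaining agents, assign all its remaining approvers to `x*`,
and remove them. -/
inductive GreedyOn {n m : ℕ} (A : Fin n → Finset (Fin m)) :
    Finset (Fin n) → (Fin n → Fin m) → Prop
  | empty (a : Fin n → Fin m) : GreedyOn A ∅ a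
  | step (N' : Finset (Fin n)) (a : Fin n → Fin m) (xstar : Fin m)
      (hmax : ∀ y : Fin m,
        (N'.filter (fun i => y ∈ A i)).card ≤ (N'.filter (fun i => xstar ∈ A i)).card)
      (hassign : ∀ i ∈ N'.filter (fun i => xstar ∈ A i), a i = xstar)
      (hrest : GreedyOn A (N' \ N'.filter (fun i => xstar ∈ A i)) a) :
      GreedyOn A N' a

/-!
If every agent sits on an approved alternative that carries strictly more agents than any other
alternative she approves, no deviation pays: by convexity of `g`, spreading mass `d` over
alternatives whose load (without her) is at most `M` gains at most `g (M + ∑ d) - g M`, and by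
monotonicity this is at most the gain of putting her whole share back on her own alternative,
whose load is `M`. The greedy procedure produces such a profile: if agent `i` is assigned to `x*`
and approves `y`, the agents that end up on `y` are remaining approvers of `y` other than `i`, so
they are fewer than the remaining approvers of `x*`, all of whom are assigned to `x*`.
-/

open Finset

theorem ConvexOn.map_add_sub_map_le_of_le {s : Set ℝ} {g : ℝ → ℝ} (hg : ConvexOn ℝ s g)
    {a b h : ℝ} (ha : a ∈ s) (hbh : b + h ∈ s) (hab : a ≤ b) (hh : 0 ≤ h) :
    g (a + h) - g a ≤ g (b + h) - g b := by
  rcases hh.eq_or_lt with rfl | hh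
  · simp
  have ht : 0 < b + h - a := by linarith
  -- `a + h` and `b` are mirror-image convex combinations of `a` and `b + h`
  have hl : 0 ≤ (b - a) / (b + h - a) := div_nonneg (by linarith) ht.le
  have hu : 0 ≤ h / (b + h - a) := div_nonneg hh.le ht.le
  have h₁ := hg.2 ha hbh hl hu (by field_simp; ring)
  have h₂ := hg.2 ha hbh hu hl (by field_simp; ring)
  simp only [smul_eq_mul] at h₁ h₂
  have e₁ : (b - a) / (b + h - a) * a + h / (b + h - a) * (b + h) = a + h := by
    field_simp; ring
  have e₂ : h / (b + h - a) * a + (b - a) / (b + h - a) * (b + h) = b := by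
    field_simp; ring
  rw [e₁] at h₁
  rw [e₂] at h₂
  have e₃ : (b - a) / (b + h - a) + h / (b + h - a) = 1 := by field_simp; ring
  linear_combination h₁ + h₂ + (g a + g (b + h)) * e₃

theorem ConvexOn.sum_map_add_sub_map_le {ι : Type*} {s : Set ℝ} {g : ℝ → ℝ} (hg : ConvexOn ℝ s g)
    {T d : ι → ℝ} {M : ℝ} (A : Finset ι) (hT : ∀ x ∈ A, T x ∈ s) (hTM : ∀ x ∈ A, T x ≤ M)
    (hd : ∀ x ∈ A, 0 ≤ d x) (hM : M ∈ s) (hMd : M + ∑ x ∈ A, d x ∈ s) :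
    ∑ x ∈ A, (g (T x + d x) - g (T x)) ≤ g (M + ∑ x ∈ A, d x) - g M := by
  classical
  induction A using Finset.induction_on with
  | empty => simp
  | insert y A hy ih =>
    simp only [mem_insert, forall_eq_or_imp] at hT hTM hd
    rw [sum_insert hy] at hMd ⊢
    rw [sum_insert hy]
    have hA : 0 ≤ ∑ x ∈ A, d x := sum_nonneg hd.2
    have hMA : M + ∑ x ∈ A, d x ∈ s :=
      hg.1.ordConnected.out hM hMd ⟨by linarith, by linarith [hd.1]⟩
    have hexch := hg.map_add_sub_map_le_of_le (b := M + ∑ x ∈ A, d x) hT.1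
      (by convert hMd using 1; ring) (by linarith [hTM.1]) hd.1
    rw [add_assoc, add_comm (∑ x ∈ A, d x)] at hexch
    linarith [ih hT.2 hTM.2 hd.2 hMA]

theorem ConvexOn.sum_add_le_sum_add_ite {ι : Type*} [DecidableEq ι] {s : Set ℝ} {g : ℝ → ℝ}
    (hg : ConvexOn ℝ s g) (hmono : MonotoneOn g s) {T d : ι → ℝ} {A : Finset ι} {x₀ : ι}
    {w : ℝ} (hx₀ : x₀ ∈ A) (hT : ∀ x ∈ A, T x ∈ s) (hTmax : ∀ x ∈ A, T x ≤ T x₀)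
    (hd : ∀ x ∈ A, 0 ≤ d x) (hdw : ∑ x ∈ A, d x ≤ w) (hw : T x₀ + w ∈ s) :
    ∑ x ∈ A, g (T x + d x) ≤ ∑ x ∈ A, g (T x + if x = x₀ then w else 0) := by
  have hD : 0 ≤ ∑ x ∈ A, d x := sum_nonneg hd
  have hMD : T x₀ + ∑ x ∈ A, d x ∈ s :=
    hg.1.ordConnected.out (hT x₀ hx₀) hw ⟨by linarith, by linarith⟩
  have hshift := hg.sum_map_add_sub_map_le A hT hTmax hd (hT x₀ hx₀) hMD
  have hmove := hmono hMD hw (by linarith)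
  have hpure : ∑ x ∈ A, (g (T x + if x = x₀ then w else 0) - g (T x))
      = g (T x₀ + w) - g (T x₀) := by
    rw [sum_eq_single_of_mem x₀ hx₀ (fun x _ hx => by simp [hx])]
    simp
  rw [sum_sub_distrib] at hshift hpure
  linarith

theorem sum_pureProfile_apply (n m : ℕ) (a : Fin n → Fin m) (x : Fin m) :
    (∑ j, pureProfile n m a j) x = #{j | a j = x} / n := by
  simp [pureProfile, Finset.sum_apply, sum_ite, eq_comm, div_eq_mul_inv]

theorem isStrategy_pureProfile (n m : ℕ) (a : Fin n → Fin m) (i : Fin n) :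
    IsStrategy n m (pureProfile n m a i) :=
  ⟨fun x => by unfold pureProfile; split_ifs <;> positivity, by simp [pureProfile]⟩

theorem isNash_pureProfile {n m : ℕ} {A : Fin n → Finset (Fin m)} {g : Fin n → ℝ → ℝ}
    (hconv : ∀ i, ConvexOn ℝ (Set.Icc 0 1) (g i))
    (hmono : ∀ i, MonotoneOn (g i) (Set.Icc 0 1))
    {a : Fin n → Fin m} (hmem : ∀ i, a i ∈ A i)
    (hlt : ∀ i, ∀ y ∈ A i, y ≠ a i → #{j | a j = y} < #{j | a j = a i}) :
    IsNash n m (fun i d => ∑ x ∈ A i, g i (d x)) (pureProfile n m a) := by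
  refine ⟨isStrategy_pureProfile n m a, fun i d hd => ?_⟩
  have hn : (0 : ℝ) < n := by exact_mod_cast i.pos
  set T := (∑ j, pureProfile n m a j) - pureProfile n m a i
  have hT : ∀ x, T x = ((#{j | a j = x} : ℝ) - if x = a i then 1 else 0) / n := by
    intro x
    simp only [T, Pi.sub_apply, sum_pureProfile_apply, pureProfile]
    split_ifs <;> ring
  have hcard_le : ∀ x, (#{j | a j = x} : ℝ) ≤ n := fun x => by
    exact_mod_cast (card_filter_le _ _).trans_eq (card_fin n)
  have hcard_pos : (1 : ℝ) ≤ #{j | a j = a i} :=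
    Nat.one_le_cast.2 (card_pos.2 ⟨i, by simp⟩)
  have hT_nonneg : ∀ x, 0 ≤ T x := fun x => by
    rw [hT]; split_ifs with hx
    · subst hx; exact div_nonneg (by linarith) hn.le
    · exact div_nonneg (by simp) hn.le
  have hTmax : ∀ x ∈ A i, T x ≤ T (a i) := fun x hx => by
    by_cases hxa : x = a i
    · rw [hxa]
    rw [hT, hT, if_neg hxa, if_pos rfl]
    have : (#{j | a j = x} : ℝ) + 1 ≤ #{j | a j = a i} := by exact_mod_cast hlt i x hx hxa
    exact div_le_div_of_nonneg_right (by linarith) hn.le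
  have hw : T (a i) + 1 / n ≤ 1 := by
    rw [hT, if_pos rfl, ← add_div, div_le_one hn]; linarith [hcard_le (a i)]
  have hdw : ∑ x ∈ A i, d x ≤ 1 / n :=
    hd.2 ▸ sum_le_sum_of_subset_of_nonneg (subset_univ _) fun x _ _ => hd.1 x
  have hbest := (hconv i).sum_add_le_sum_add_ite (hmono i) (hmem i)
    (fun x hx => ⟨hT_nonneg x, by linarith [hTmax x hx, one_div_nonneg.2 hn.le]⟩) hTmax
    (fun x _ => hd.1 x) hdw ⟨by linarith [hT_nonneg (a i), one_div_nonneg.2 hn.le], hw⟩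
  simpa [T, pureProfile] using hbest

namespace GreedyOn

variable {n m : ℕ} {A : Fin n → Finset (Fin m)} {S : Finset (Fin n)} {a : Fin n → Fin m}

theorem congr (h : GreedyOn A S a) {b : Fin n → Fin m} (hab : ∀ j ∈ S, a j = b j) :
    GreedyOn A S b := by
  induction h with
  | empty => exact .empty b
  | step N' a xstar hmax hassign _ ih =>
    refine .step N' b xstar hmax (fun i hi => ?_) (ih fun j hj => hab j (mem_sdiff.1 hj).1)
    rw [← hab i (mem_of_mem_filter i hi), hassign i hi]

theorem apply_mem (h : GreedyOn A S a) {i : Fin n} (hi : i ∈ S) : a i ∈ A i := by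
  induction h with
  | empty => simp at hi
  | step N' a xstar _ hassign _ ih =>
    by_cases hix : xstar ∈ A i
    · rwa [hassign i (mem_filter.2 ⟨hi, hix⟩)]
    · exact ih (mem_sdiff.2 ⟨hi, fun h => hix (mem_filter.1 h).2⟩)

theorem card_filter_lt (h : GreedyOn A S a) {i : Fin n} (hi : i ∈ S) {y : Fin m}
    (hy : y ∈ A i) (hya : y ≠ a i) : #{j ∈ S | a j = y} < #{j ∈ S | a j = a i} := by
  induction h with
  | empty => simp at hi
  | step N' a xstar hmax hassign hrest ih =>
    have h := GreedyOn.step N' a xstar hmax hassign hrest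
    by_cases hix : xstar ∈ A i
    · have hai : a i = xstar := hassign i (mem_filter.2 ⟨hi, hix⟩)
      have hsub : {j ∈ N' | a j = y} ⊂ {j ∈ N' | y ∈ A j} := by
        refine (ssubset_iff_of_subset fun j hj => ?_).2
          ⟨i, by simp [hi, hy], by simp [hya.symm]⟩
        obtain ⟨hjN, rfl⟩ := mem_filter.1 hj
        exact mem_filter.2 ⟨hjN, h.apply_mem hjN⟩
      calc #{j ∈ N' | a j = y} < #{j ∈ N' | y ∈ A j} := card_lt_card hsub
        _ ≤ #{j ∈ N' | xstar ∈ A j} := hmax y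
        _ ≤ #{j ∈ N' | a j = a i} := card_le_card fun j hj =>
            mem_filter.2 ⟨(mem_filter.1 hj).1, hai ▸ hassign j hj⟩
    · have hrest_filter : ∀ z, z ≠ xstar →
          {j ∈ N' \ {j ∈ N' | xstar ∈ A j} | a j = z} = {j ∈ N' | a j = z} := fun z hz => by
        ext j
        simp only [mem_filter, mem_sdiff, and_congr_left_iff, and_iff_left_iff_imp]
        rintro rfl - hjx
        exact hz (hassign j (mem_filter.2 hjx))
      have hai : a i ≠ xstar := fun he => hix (he ▸ h.apply_mem hi)
      have hyx : y ≠ xstar := fun he => hix (he ▸ hy)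
      rw [← hrest_filter y hyx, ← hrest_filter (a i) hai]
      exact ih (mem_sdiff.2 ⟨hi, fun h => hix (mem_filter.1 h).2⟩) hya

end GreedyOn

theorem exists_greedyOn {n m : ℕ} {A : Fin n → Finset (Fin m)} (hA : ∀ i, (A i).Nonempty)
    (S : Finset (Fin n)) : ∃ a, GreedyOn A S a := by
  induction S using Finset.strongInduction with
  | H S ih =>
    rcases S.eq_empty_or_nonempty with rfl | ⟨i, hi⟩
    · exact ⟨fun i => (hA i).choose, .empty _⟩
    obtain ⟨xstar, -, hmax⟩ := exists_max_image univ (fun x => #{j ∈ S | x ∈ A j})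
      ⟨(hA i).choose, mem_univ _⟩
    have hF : {j ∈ S | xstar ∈ A j}.Nonempty := card_pos.1 <|
      (card_pos.2 ⟨i, mem_filter.2 ⟨hi, (hA i).choose_spec⟩⟩).trans_le (hmax _ (mem_univ _))
    obtain ⟨a, ha⟩ := ih _ (sdiff_ssubset (filter_subset _ S) hF)
    refine ⟨fun j => if xstar ∈ A j then xstar else a j,
      .step S _ xstar (fun y => hmax y (mem_univ y)) (fun j hj => if_pos (mem_filter.1 hj).2) ?_⟩
    refine ha.congr fun j hj => (if_neg fun hj' => ?_).symm
    exact (mem_sdiff.1 hj).2 (mem_filter.2 ⟨(mem_sdiff.1 hj).1, hj'⟩)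

theorem greedy_gives_nash_general
    (n m : ℕ)
    (A : Fin n → Finset (Fin m)) (hA : ∀ i, (A i).Nonempty)
    (g : Fin n → ℝ → ℝ)
    (hconv : ∀ i, StrictConvexOn ℝ (Set.Icc (0 : ℝ) 1) (g i))
    (hmono : ∀ i, StrictMonoOn (g i) (Set.Icc (0 : ℝ) 1)) :
    (∃ δ, IsNash n m (fun i d => ∑ x ∈ A i, g i (d x)) δ) ∧
    (∀ a : Fin n → Fin m, GreedyOn A Finset.univ a →
      IsNash n m (fun i d => ∑ x ∈ A i, g i (d x)) (pureProfile n m a)) := by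
  have hgreedy : ∀ a, GreedyOn A univ a →
      IsNash n m (fun i d => ∑ x ∈ A i, g i (d x)) (pureProfile n m a) := fun a ha =>
    isNash_pureProfile (fun i => (hconv i).convexOn) (fun i => (hmono i).monotoneOn)
      (fun i => ha.apply_mem (mem_univ i))
      fun i _ hy hya => ha.card_filter_lt (mem_univ i) hy hya
  obtain ⟨a, ha⟩ := exists_greedyOn hA univ
  exact ⟨⟨_, hgreedy a ha⟩, hgreedy⟩

/-- with binary symmetric separable strictly convex utilities, a
Nash equilibrium always exists; moreover, every outcome of the greedy procedure
is a Nash equilibrium. -/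
theorem greedy_gives_nash
    (n m : ℕ) (hn : 0 < n) (hm : 0 < m)
    (A : Fin n → Finset (Fin m)) (hA : ∀ i, (A i).Nonempty)
    (g : Fin n → ℝ → ℝ)
    (hcont : ∀ i, Continuous (g i))
    (hconv : ∀ i, StrictConvexOn ℝ (Set.Icc (0 : ℝ) 1) (g i))
    (hmono : ∀ i, StrictMonoOn (g i) (Set.Icc (0 : ℝ) 1)) :
    (∃ δ, IsNash n m (fun i d => ∑ x ∈ A i, g i (d x)) δ) ∧
    (∀ a : Fin n → Fin m, GreedyOn A Finset.univ a →
      IsNash n m (fun i d => ∑ x ∈ A i, g i (d x)) (pureProfile n m a)) :=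
  greedy_gives_nash_general n m A hA g hconv hmono
end

section
/- There exists a two-agent budget-aggregation game over two alternatives with separable utilities (one agent with u_1(delta) = sqrt(delta_a) + sqrt(delta_b), the other with u_2(delta) = delta_a^2 + delta_b^2) that has no Nash equilibrium. -/
/-- The utilities of the two-agent, two-alternative counterexample:
`u₁(δ) = √δ_a + √δ_b` and `u₂(δ) = δ_a² + δ_b²`. -/
noncomputable def exUtil : Fin 2 → (Fin 2 → ℝ) → ℝ :=
  ![fun d => Real.sqrt (d 0) + Real.sqrt (d 1),
    fun d => (d 0) ^ 2 + (d 1) ^ 2]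

set_option maxHeartbeats 1000000 in
/-- this two-agent budget-aggregation game over two alternatives
with separable utilities has no Nash equilibrium. -/
theorem no_nash_example :
    ¬ ∃ δ : Fin 2 → Fin 2 → ℝ, IsNash 2 2 exUtil δ := by
  rintro ⟨δ, hstrat, hnash⟩
  obtain ⟨h0pos, h0sum⟩ := hstrat 0
  obtain ⟨h1pos, h1sum⟩ := hstrat 1
  rw [Fin.sum_univ_two] at h0sum h1sum
  norm_num at h0sum h1sum
  have ha0 : 0 ≤ δ 0 0 := h0pos 0
  have ha1 : δ 0 0 ≤ 1/2 := by have := h0pos 1; linarith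
  have hb0 : 0 ≤ δ 1 0 := h1pos 0
  have hb1 : δ 1 0 ≤ 1/2 := by have := h1pos 1; linarith
  have hsum : ∀ x, (∑ j : Fin 2, δ j) x = δ 0 x + δ 1 x := by
    intro x; simp [Fin.sum_univ_two]
  -- the three relevant deviation strategies
  have hd1 : IsStrategy 2 2 ![1/2 - δ 1 0, δ 1 0] := by
    refine ⟨fun x => ?_, ?_⟩
    · fin_cases x <;> simp <;> try linarith
    · norm_num [Fin.sum_univ_two]
  have hd2a : IsStrategy 2 2 ![(0:ℝ), 1/2] := by
    refine ⟨fun x => ?_, ?_⟩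
    · fin_cases x <;> norm_num
    · norm_num [Fin.sum_univ_two]
  have hd2b : IsStrategy 2 2 ![(1:ℝ)/2, 0] := by
    refine ⟨fun x => ?_, ?_⟩
    · fin_cases x <;> norm_num
    · norm_num [Fin.sum_univ_two]
  -- the resulting aggregates
  have harg1 : ((∑ j : Fin 2, δ j) - δ 0 + ![1/2 - δ 1 0, δ 1 0]) = ![1/2, 1/2] := by
    funext x
    simp only [Pi.add_apply, Pi.sub_apply, hsum]
    fin_cases x <;> simp <;> try linarith
  have harg2a : ((∑ j : Fin 2, δ j) - δ 1 + ![(0:ℝ), 1/2]) = ![δ 0 0, 1 - δ 0 0] := by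
    funext x
    simp only [Pi.add_apply, Pi.sub_apply, hsum]
    fin_cases x <;> simp <;> try linarith
  have harg2b : ((∑ j : Fin 2, δ j) - δ 1 + ![(1:ℝ)/2, 0]) = ![δ 0 0 + 1/2, 1/2 - δ 0 0] := by
    funext x
    simp only [Pi.add_apply, Pi.sub_apply, hsum]
    fin_cases x <;> simp <;> try linarith
  have hS0 : (∑ j : Fin 2, δ j) 0 = δ 0 0 + δ 1 0 := hsum 0
  have hS1 : (∑ j : Fin 2, δ j) 1 = 1 - (δ 0 0 + δ 1 0) := by
    have := hsum 1; rw [this]; linarith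
  -- Step 1: agent 1 can balance the aggregate, forcing the aggregate to be (1/2, 1/2)
  have key1 := hnash 0 _ hd1
  rw [harg1] at key1
  simp only [exUtil, Matrix.cons_val_zero, Matrix.cons_val_one, Matrix.head_cons] at key1
  rw [hS0, hS1] at key1
  set t := δ 0 0 + δ 1 0 with htdef
  have ht0 : 0 ≤ t := by linarith
  have ht1 : t ≤ 1 := by linarith
  have hteq : t = 1/2 := by
    have hs2 : Real.sqrt (1/2) + Real.sqrt (1/2) = Real.sqrt 2 := by
      rw [show (1:ℝ)/2 = 2⁻¹ by norm_num, Real.sqrt_inv]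
      have h2 : (0:ℝ) < Real.sqrt 2 := Real.sqrt_pos.2 (by norm_num)
      field_simp
      nlinarith [Real.sq_sqrt (show (0:ℝ) ≤ 2 by norm_num)]
    rw [hs2] at key1
    have hst : Real.sqrt t ^ 2 = t := Real.sq_sqrt ht0
    have hsu : Real.sqrt (1 - t) ^ 2 = 1 - t := Real.sq_sqrt (by linarith)
    have h2 : Real.sqrt 2 ^ 2 = 2 := Real.sq_sqrt (by norm_num)
    have hn1 : 0 ≤ Real.sqrt t := Real.sqrt_nonneg t
    have hn2 : 0 ≤ Real.sqrt (1 - t) := Real.sqrt_nonneg _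
    have hn3 : 0 ≤ Real.sqrt 2 := Real.sqrt_nonneg 2
    have hp : 1/2 ≤ Real.sqrt t * Real.sqrt (1 - t) := by
      nlinarith [mul_nonneg (show 0 ≤ Real.sqrt t + Real.sqrt (1-t) - Real.sqrt 2 by linarith)
        (show 0 ≤ Real.sqrt t + Real.sqrt (1-t) + Real.sqrt 2 by linarith)]
    have hq : 1/4 ≤ t * (1 - t) := by
      nlinarith [mul_le_mul hp hp (by norm_num) (mul_nonneg hn1 hn2)]
    have hz : (2*t - 1)^2 = 0 := le_antisymm (by nlinarith) (sq_nonneg _)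
    have : 2*t - 1 = 0 := by
      have := pow_eq_zero_iff (n := 2) (by norm_num) |>.mp hz
      exact this
    linarith
  -- Step 2: agent 2 profits by deviating to one of the two extremes
  have key2a := hnash 1 _ hd2a
  have key2b := hnash 1 _ hd2b
  rw [harg2a] at key2a
  rw [harg2b] at key2b
  simp only [exUtil, Matrix.cons_val_zero, Matrix.cons_val_one, Matrix.head_cons] at key2a key2b
  rw [hS0, hS1, hteq] at key2a key2b
  norm_num at key2a key2b
  nlinarith [sq_nonneg (2 * δ 0 0 - 1), sq_nonneg (δ 0 0)]
end

section
/- For l1 preferences, a strategy profile (delta_i)_{i in N} is a Nash equilibrium if and only if no agent contributes to an alternative that is oversupplied relative to her peak: for all i and x, delta_{i,x} > 0 implies delta_x <= p_{i,x}. -/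
/-- The `ℓ₁` utility of agent with peak `p`: `u(δ) = -‖δ - p‖₁`. -/
def l1Util {m : ℕ} (p : Fin m → ℝ) (d : Fin m → ℝ) : ℝ :=
  -∑ x, |d x - p x|

lemma aux_max (a d : ℝ) (hd : 0 ≤ d) : max a 0 - d ≤ max (a - d) 0 := by
  rcases max_cases a 0 with ⟨h1, h2⟩ | ⟨h1, h2⟩ <;>
    rcases max_cases (a - d) 0 with ⟨h3, h4⟩ | ⟨h3, h4⟩ <;> linarith

lemma abs_eq_self_plus (v : ℝ) : |v| = v + 2 * max (-v) 0 := by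
  rcases le_total v 0 with h | h
  · rw [abs_of_nonpos h, max_eq_left (by linarith)]; ring
  · rw [abs_of_nonneg h, max_eq_right (by linarith)]; ring

lemma util_eq {m : ℕ} (p c d : Fin m → ℝ) (h : ∑ x, (c x + d x - p x) = 0) :
    l1Util p (fun x => c x + d x) = -(2 * ∑ x, max (p x - c x - d x) 0) := by
  unfold l1Util
  have key : ∀ x : Fin m, |c x + d x - p x|
      = (c x + d x - p x) + 2 * max (p x - c x - d x) 0 := by
    intro x
    have e : -(c x + d x - p x) = p x - c x - d x := by ring
    rw [abs_eq_self_plus (c x + d x - p x), e]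
  rw [Finset.sum_congr rfl fun x _ => key x, Finset.sum_add_distrib, h,
    ← Finset.mul_sum]
  ring

/-- Per-agent best-response characterization. -/
lemma key_iff (n m : ℕ) (c p δi : Fin m → ℝ)
    (hn : (0:ℝ) < 1 / n)
    (hc : ∀ x, 0 ≤ c x)
    (hpc : ∑ x, (p x - c x) = 1 / n)
    (hδi : IsStrategy n m δi) :
    (∀ d, IsStrategy n m d →
      (∑ x, max (p x - c x - δi x) 0) ≤ ∑ x, max (p x - c x - d x) 0) ↔
    (∀ x, 0 < δi x → c x + δi x ≤ p x) := by
  have hnR : (0:ℝ) < n := by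
    by_contra h
    push_neg at h
    rw [one_div] at hn
    have : (n:ℝ)⁻¹ ≤ 0 := inv_nonpos.mpr h
    linarith
  set S := ∑ x, max (p x - c x) 0 with hS
  have hSlb : 1 / n ≤ S := by
    rw [← hpc]
    exact Finset.sum_le_sum fun x _ => le_max_left _ _
  have hSpos : 0 < S := lt_of_lt_of_le hn hSlb
  have hnS : 1 ≤ (n:ℝ) * S := by
    have := mul_le_mul_of_nonneg_left hSlb (le_of_lt hnR)
    calc (1:ℝ) = (n:ℝ) * (1 / n) := by field_simp
    _ ≤ (n:ℝ) * S := this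
  -- lower bound
  have lb : ∀ d : Fin m → ℝ, IsStrategy n m d →
      S - 1 / n ≤ ∑ x, max (p x - c x - d x) 0 := by
    intro d hd
    have : ∑ x, (max (p x - c x) 0 - d x) ≤ ∑ x, max (p x - c x - d x) 0 := by
      refine Finset.sum_le_sum fun x _ => ?_
      have := aux_max (p x - c x) (d x) (hd.1 x)
      linarith [this]
    rwa [Finset.sum_sub_distrib, hd.2] at this
  -- minimizer
  set dstar : Fin m → ℝ := fun x => max (p x - c x) 0 / ((n:ℝ) * S) with hdstar
  have hds : IsStrategy n m dstar := by
    constructor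
    · intro x
      exact div_nonneg (le_max_right _ _) (by positivity)
    · rw [hdstar]
      simp only
      rw [← Finset.sum_div, ← hS]
      rw [eq_div_iff (by positivity), div_mul_eq_mul_div, mul_comm (n:ℝ) S,
        mul_div_assoc]
      field_simp
  have hfds : ∑ x, max (p x - c x - dstar x) 0 = S - 1 / n := by
    have term : ∀ x : Fin m, max (p x - c x - dstar x) 0 = max (p x - c x) 0 - dstar x := by
      intro x
      rcases le_or_gt (p x - c x) 0 with h | h
      · have hd0 : dstar x = 0 := by
          rw [hdstar]; simp only
          rw [max_eq_right h, zero_div]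
        rw [hd0, max_eq_right h, sub_zero, max_eq_right (by linarith)]
        ring
      · have hdle : dstar x ≤ p x - c x := by
          rw [hdstar]; simp only
          rw [max_eq_left (le_of_lt h), div_le_iff₀ (by positivity)]
          nlinarith
        have hdnn : 0 ≤ dstar x := hds.1 x
        rw [max_eq_left (by linarith), max_eq_left (le_of_lt h)]
    rw [Finset.sum_congr rfl fun x _ => term x, Finset.sum_sub_distrib, hds.2, ← hS]
  constructor
  · intro hbr
    have h1 : ∑ x, max (p x - c x - δi x) 0 ≤ S - 1 / n := by
      have := hbr dstar hds
      rwa [hfds] at this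
    have h2 := lb δi hδi
    have heq : ∑ x, (max (p x - c x) 0 - δi x) = ∑ x, max (p x - c x - δi x) 0 := by
      rw [Finset.sum_sub_distrib, hδi.2, ← hS]
      linarith
    have termeq : ∀ x ∈ Finset.univ, max (p x - c x) 0 - δi x = max (p x - c x - δi x) 0 := by
      rw [← Finset.sum_eq_sum_iff_of_le]
      · exact heq
      · intro x _
        have := aux_max (p x - c x) (δi x) (hδi.1 x)
        linarith
    intro x hx
    by_contra hcon
    push_neg at hcon
    have := termeq x (Finset.mem_univ x)
    have h0 : max (p x - c x - δi x) 0 = 0 := max_eq_right (by linarith)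
    rcases max_cases (p x - c x) 0 with ⟨e1, e2⟩ | ⟨e1, e2⟩ <;> rw [e1] at this <;> linarith
  · intro hcond d hd
    have hfδi : ∑ x, max (p x - c x - δi x) 0 = S - 1 / n := by
      have term : ∀ x : Fin m, max (p x - c x - δi x) 0 = max (p x - c x) 0 - δi x := by
        intro x
        rcases eq_or_lt_of_le (hδi.1 x) with h | h
        · rw [← h]; simp
        · have := hcond x h
          rw [max_eq_left (by linarith), max_eq_left (by linarith)]
      rw [Finset.sum_congr rfl fun x _ => term x, Finset.sum_sub_distrib, hδi.2, ← hS]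
    rw [hfδi]
    exact lb d hd

/-- with `ℓ₁` preferences, a profile is a Nash equilibrium iff no
agent contributes to an alternative that is oversupplied relative to her peak. -/
theorem l1_nash_iff_no_oversupplied
    (n m : ℕ) (hn : 0 < n)
    (p : Fin n → Fin m → ℝ)
    (hp : ∀ i, (∀ x, 0 ≤ p i x) ∧ ∑ x, p i x = 1)
    (δ : Fin n → Fin m → ℝ) :
    IsNash n m (fun i => l1Util (p i)) δ ↔
      (∀ i, IsStrategy n m (δ i)) ∧
      (∀ i x, 0 < δ i x → (∑ j, δ j x) ≤ p i x) := by
  have hnR : (0:ℝ) < n := by exact_mod_cast hn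
  have hn1 : (0:ℝ) < 1 / n := by positivity
  -- general facts given all strategies
  have facts : ∀ (hstr : ∀ i, IsStrategy n m (δ i)) (i : Fin n),
      (∀ x, 0 ≤ (fun x => ∑ j, δ j x - δ i x) x) ∧
      (∑ x, (p i x - (∑ j, δ j x - δ i x)) = 1 / n) := by
    intro hstr i
    constructor
    · intro x
      simp only
      have : δ i x ≤ ∑ j, δ j x :=
        Finset.single_le_sum (fun j _ => (hstr j).1 x) (Finset.mem_univ i)
      linarith
    · have hsum : ∑ x, (∑ j, δ j x) = 1 := by
        rw [Finset.sum_comm]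
        have : ∀ j ∈ Finset.univ, ∑ x, δ j x = 1 / n := fun j _ => (hstr j).2
        rw [Finset.sum_congr rfl this, Finset.sum_const, Finset.card_univ,
          Fintype.card_fin, nsmul_eq_mul]
        field_simp
      have : ∑ x, (p i x - (∑ j, δ j x - δ i x))
          = (∑ x, p i x) - (∑ x, ∑ j, δ j x) + ∑ x, δ i x := by
        rw [Finset.sum_sub_distrib]
        rw [Finset.sum_sub_distrib]
        ring
      rw [this, (hp i).2, hsum, (hstr i).2]
      ring
  -- rewriting utilities
  have urew : ∀ (hstr : ∀ i, IsStrategy n m (δ i)) (i : Fin n) (d : Fin m → ℝ),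
      IsStrategy n m d →
      l1Util (p i) ((∑ j, δ j) - δ i + d)
        = -(2 * ∑ x, max (p i x - (∑ j, δ j x - δ i x) - d x) 0) := by
    intro hstr i d hd
    have hfun : ((∑ j, δ j) - δ i + d) = fun x => (∑ j, δ j x - δ i x) + d x := by
      funext x
      simp [Finset.sum_apply]
    rw [hfun]
    apply util_eq
    have h := (facts hstr i).2
    rw [Finset.sum_sub_distrib] at h ⊢
    rw [Finset.sum_sub_distrib] at h
    rw [Finset.sum_add_distrib, Finset.sum_sub_distrib, hd.2]
    linarith
  have urew2 : ∀ (hstr : ∀ i, IsStrategy n m (δ i)) (i : Fin n),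
      l1Util (p i) (∑ j, δ j)
        = -(2 * ∑ x, max (p i x - (∑ j, δ j x - δ i x) - δ i x) 0) := by
    intro hstr i
    have : (∑ j, δ j) = (∑ j, δ j) - δ i + δ i := by ring
    rw [this]
    exact urew hstr i (δ i) (hstr i)
  constructor
  · rintro ⟨hstr, hbr⟩
    refine ⟨hstr, fun i x hx => ?_⟩
    have key := (key_iff n m (fun x => ∑ j, δ j x - δ i x) (p i) (δ i) hn1
      (facts hstr i).1 (facts hstr i).2 (hstr i)).mp ?_ x hx
    · linarith [key]
    · intro d hd
      have := hbr i d hd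
      dsimp only at this
      rw [urew hstr i d hd, urew2 hstr i] at this
      linarith
  · rintro ⟨hstr, hcond⟩
    refine ⟨hstr, fun i d hd => ?_⟩
    have key := (key_iff n m (fun x => ∑ j, δ j x - δ i x) (p i) (δ i) hn1
      (facts hstr i).1 (facts hstr i).2 (hstr i)).mpr ?_ d hd
    · dsimp only
      rw [urew hstr i d hd, urew2 hstr i]
      linarith
    · intro x hx
      have := hcond i x hx
      linarith
end

section
/- For l1 preferences, the set of equilibrium aggregate distributions need not be convex: there is a 3-agent, 4-alternative instance with two equilibrium aggregate distributions whose midpoint is not an equilibrium aggregate distribution. -/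
/-- Peaks of the 3-agent, 4-alternative counterexample. -/
noncomputable def peaks : Fin 3 → Fin 4 → ℝ :=
  ![![3/10, 3/10, 0, 4/10],
    ![2/10, 2/10, 6/10, 0],
    ![2/10, 2/10, 6/10, 0]]

/-- The set of equilibrium aggregate distributions for the ℓ₁ game with `peaks`. -/
def eqAgg : Set (Fin 4 → ℝ) :=
  {d | ∃ δ : Fin 3 → Fin 4 → ℝ,
    IsNash 3 4 (fun i => l1Util (peaks i)) δ ∧ (∀ x, (∑ i, δ i x) = d x)}

/-!
In an ℓ₁ game an agent who contributes to an alternative oversupplied for her while another one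
is undersupplied gains by shifting a little mass from the first to the second; conversely, a
profile in which nobody contributes to an alternative oversupplied for them is an equilibrium.
At the midpoint `(1/4, 1/4, 14/30, 1/30)` every alternative but the third is oversupplied and
the third undersupplied for agents 2 and 3, so each of them puts her whole budget `1/3` on the
third alternative, whose aggregate would then be at least `2/3 > 14/30`.
-/

open Finset

lemma abs_sub_add_le_abs_sub_add {s q a e : ℝ} (ha : 0 ≤ a) (he : 0 ≤ e)
    (hle : 0 < a → s ≤ q) : |s - q| + a ≤ |s - a + e - q| + e := by
  have hshift : |s - q| + a = |s - a - q| := by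
    rcases ha.eq_or_lt with rfl | hpos
    · simp
    · have := hle hpos
      rw [abs_of_nonpos (by linarith), abs_of_nonpos (by linarith)]
      ring
  calc |s - q| + a = |(s - a + e - q) + -e| := by rw [hshift]; ring_nf
    _ ≤ |s - a + e - q| + e := by simpa [abs_of_nonneg he] using abs_add_le (s - a + e - q) (-e)

lemma l1Util_add_single_sub_single {m : ℕ} {p S : Fin m → ℝ} {x y : Fin m} {ε : ℝ}
    (hxy : x ≠ y) (hε : 0 ≤ ε) (hx : ε ≤ S x - p x) (hy : ε ≤ p y - S y) :
    l1Util p (S + Pi.single y ε - Pi.single x ε) = l1Util p S + 2 * ε := by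
  have hpoint : ∀ z, |(S + Pi.single y ε - Pi.single x ε : Fin m → ℝ) z - p z|
      = |S z - p z| - (Pi.single y ε : Fin m → ℝ) z - (Pi.single x ε : Fin m → ℝ) z := by
    intro z
    by_cases hzx : z = x
    · subst hzx
      simp only [Pi.add_apply, Pi.sub_apply, Pi.single_eq_same, Pi.single_eq_of_ne hxy]
      rw [abs_of_nonneg (by linarith), abs_of_nonneg (by linarith)]
      ring
    by_cases hzy : z = y
    · subst hzy
      simp only [Pi.add_apply, Pi.sub_apply, Pi.single_eq_same, Pi.single_eq_of_ne hzx]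
      rw [abs_of_nonpos (by linarith), abs_of_nonpos (by linarith)]
      ring
    · simp [Pi.single_eq_of_ne hzx, Pi.single_eq_of_ne hzy]
  simp only [l1Util, hpoint, sum_sub_distrib, sum_pi_single', mem_univ, if_true]
  ring

section Nash

variable {n m : ℕ} {p δ : Fin n → Fin m → ℝ}

theorem isNash_l1_of_forall_pos_le (hδ : ∀ i, IsStrategy n m (δ i))
    (hle : ∀ i x, 0 < δ i x → (∑ j, δ j) x ≤ p i x) :
    IsNash n m (fun i => l1Util (p i)) δ := by
  refine ⟨hδ, fun i d hd => ?_⟩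
  have hpoint : ∀ x, |(∑ j, δ j) x - p i x| + δ i x
      ≤ |((∑ j, δ j) - δ i + d) x - p i x| + d x := fun x =>
    abs_sub_add_le_abs_sub_add ((hδ i).1 x) (hd.1 x) (hle i x)
  have hsum := sum_le_sum fun x (_ : x ∈ univ) => hpoint x
  rw [sum_add_distrib, sum_add_distrib, (hδ i).2, hd.2] at hsum
  simp only [l1Util, neg_le_neg_iff]
  linarith

theorem IsNash.l1_eq_zero_of_lt_of_lt (hnash : IsNash n m (fun i => l1Util (p i)) δ)
    {i : Fin n} {x y : Fin m} (hx : p i x < (∑ j, δ j) x) (hy : (∑ j, δ j) y < p i y) :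
    δ i x = 0 := by
  obtain ⟨hδ, hbest⟩ := hnash
  by_contra hne
  have hpos : 0 < δ i x := ((hδ i).1 x).lt_of_ne' hne
  have hxy : x ≠ y := by rintro rfl; linarith
  set S := ∑ j, δ j
  set ε := min (δ i x) (min (S x - p i x) (p i y - S y))
  have hε : 0 < ε := lt_min hpos (lt_min (by linarith) (by linarith))
  have hεx : ε ≤ δ i x := min_le_left _ _
  have hεS : ε ≤ S x - p i x := (min_le_right _ _).trans (min_le_left _ _)
  have hεp : ε ≤ p i y - S y := (min_le_right _ _).trans (min_le_right _ _)
  have hdev : IsStrategy n m (δ i + Pi.single y ε - Pi.single x ε) := by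
    refine ⟨fun z => ?_, ?_⟩
    · by_cases hzx : z = x
      · subst hzx
        simp [Pi.single_eq_of_ne hxy, hεx]
      · have hsingle : 0 ≤ (Pi.single y ε : Fin m → ℝ) := Pi.single_nonneg.2 hε.le
        simpa [Pi.single_eq_of_ne hzx] using add_nonneg ((hδ i).1 z) (hsingle z)
    · simp [sum_sub_distrib, sum_add_distrib, (hδ i).2]
  have hgain : l1Util (p i) (S - δ i + (δ i + Pi.single y ε - Pi.single x ε)) ≤ l1Util (p i) S :=
    hbest i _ hdev
  rw [show S - δ i + (δ i + Pi.single y ε - Pi.single x ε) = S + Pi.single y ε - Pi.single x ε by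
      abel, l1Util_add_single_sub_single hxy hε.le hεS hεp] at hgain
  linarith

theorem IsNash.l1_eq_one_div_of_forall_ne_lt (hnash : IsNash n m (fun i => l1Util (p i)) δ)
    {i : Fin n} {y : Fin m} (hy : (∑ j, δ j) y < p i y)
    (hover : ∀ x ≠ y, p i x < (∑ j, δ j) x) :
    δ i y = 1 / n := by
  rw [← (hnash.1 i).2, sum_eq_single y
    (fun x _ hx => hnash.l1_eq_zero_of_lt_of_lt (hover x hx) hy) (by simp)]

end Nash

lemma mem_eqAgg_of_forall_pos_le (δ : Fin 3 → Fin 4 → ℝ) {d : Fin 4 → ℝ}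
    (hδ : ∀ i, IsStrategy 3 4 (δ i)) (hagg : ∑ i, δ i = d)
    (hle : ∀ i x, 0 < δ i x → d x ≤ peaks i x) : d ∈ eqAgg :=
  ⟨δ, isNash_l1_of_forall_pos_le hδ (hagg ▸ hle), fun x => by simp [← hagg]⟩

lemma mem_eqAgg_left : (![3/10, 2/10, 14/30, 1/30] : Fin 4 → ℝ) ∈ eqAgg := by
  refine mem_eqAgg_of_forall_pos_le
    ![![3/10, 0, 0, 1/30], ![0, 1/10, 7/30, 0], ![0, 1/10, 7/30, 0]] ?_ ?_ ?_
  · intro i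
    fin_cases i <;> exact ⟨fun x => by fin_cases x <;> norm_num, by simp [Fin.sum_univ_four]; norm_num⟩
  · ext x
    fin_cases x <;> simp [Fin.sum_univ_three] <;> norm_num
  · intro i x
    fin_cases i <;> fin_cases x <;> norm_num [peaks]

-- The mirror image of `mem_eqAgg_left` under swapping the first two alternatives, which fixes `peaks`.
lemma mem_eqAgg_right : (![2/10, 3/10, 14/30, 1/30] : Fin 4 → ℝ) ∈ eqAgg := by
  refine mem_eqAgg_of_forall_pos_le
    ![![0, 3/10, 0, 1/30], ![1/10, 0, 7/30, 0], ![1/10, 0, 7/30, 0]] ?_ ?_ ?_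
  · intro i
    fin_cases i <;> exact ⟨fun x => by fin_cases x <;> norm_num, by simp [Fin.sum_univ_four]; norm_num⟩
  · ext x
    fin_cases x <;> simp [Fin.sum_univ_three] <;> norm_num
  · intro i x
    fin_cases i <;> fin_cases x <;> norm_num [peaks]

lemma midpoint_not_mem_eqAgg : (![1/4, 1/4, 14/30, 1/30] : Fin 4 → ℝ) ∉ eqAgg := by
  rintro ⟨δ, hnash, hagg⟩
  have hS : ∑ j, δ j = ![1/4, 1/4, 14/30, 1/30] := by ext x; simp [hagg]
  have hfull : ∀ i ≠ 0, δ i 2 = 1 / 3 := by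
    intro i hi
    refine hnash.l1_eq_one_div_of_forall_ne_lt ?_ fun x hx => ?_ <;> rw [hS]
    · fin_cases i <;> simp [peaks] at hi ⊢ <;> norm_num
    · fin_cases i <;> fin_cases x <;> simp [peaks] at hi hx ⊢ <;> norm_num
  have h2 : ∑ i, δ i 2 = 14 / 30 := hagg 2
  rw [Fin.sum_univ_three, hfull 1 (by decide), hfull 2 (by decide)] at h2
  linarith [(hnash.1 0).1 2]

/-- the set of equilibrium aggregate distributions is not convex:
`δ` and `δ'` below are equilibrium aggregates, but their midpoint is not. -/
theorem l1_equilibrium_aggregates_not_convex :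
    (![3/10, 2/10, 14/30, 1/30] : Fin 4 → ℝ) ∈ eqAgg ∧
    (![2/10, 3/10, 14/30, 1/30] : Fin 4 → ℝ) ∈ eqAgg ∧
    (![1/4, 1/4, 14/30, 1/30] : Fin 4 → ℝ) ∉ eqAgg :=
  ⟨mem_eqAgg_left, mem_eqAgg_right, midpoint_not_mem_eqAgg⟩
end
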